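/- arXiv:0907.0046 — 3 statements merged into one kernel-verified Lean document; each statement's English description precedes it below -/
import Mathlib

section
/- Let G be a connected simple graph on the vertex set {0,1,…,n}, and let Q be a connected component of the poset P₀ of acyclic orientations of G with 0 as a sink (a weakly connected component of the comparability graph of P₀). Then there exists a region R of C₀ such that φ maps R onto Q; that is, φ(R) = Q. -/
/-! Common definitions: acyclic orientations of a connected graph on `{0,1,…,n}`,
vertex firing, the poset `P₀`, the periodic graphic arrangement and the map `φ`. -/

/-- `d` is an orientation of the simple graph `G`: it directs every edge of `G`
(`d a b` means the edge `ab` is directed from `a` to `b`). -/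
def IsOrientation {n : ℕ} (G : SimpleGraph (Fin (n + 1)))
    (d : Fin (n + 1) → Fin (n + 1) → Prop) : Prop :=
  (∀ i j, d i j → G.Adj i j) ∧ ∀ i j, G.Adj i j → (d i j ↔ ¬ d j i)

/-- `d` is an acyclic orientation of `G`: an orientation with no directed cycle. -/
def IsAcyclicOrientation {n : ℕ} (G : SimpleGraph (Fin (n + 1)))
    (d : Fin (n + 1) → Fin (n + 1) → Prop) : Prop :=
  IsOrientation G d ∧ ∀ v, ¬ Relation.TransGen d v v

/-- The vertex `i` is a source of the orientation `d`: every incident edge points away. -/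
def IsSource {n : ℕ} (G : SimpleGraph (Fin (n + 1)))
    (d : Fin (n + 1) → Fin (n + 1) → Prop) (i : Fin (n + 1)) : Prop :=
  ∀ j, G.Adj i j → d i j

/-- The vertex `i` is a sink of the orientation `d`: every incident edge points toward it. -/
def IsSink {n : ℕ} (G : SimpleGraph (Fin (n + 1)))
    (d : Fin (n + 1) → Fin (n + 1) → Prop) (i : Fin (n + 1)) : Prop :=
  ∀ j, G.Adj i j → d j i

/-- `d'` is obtained from `d` by firing the source `i`: all edges incident to `i`
are reversed, all other edges keep their direction. -/
def FireAt {n : ℕ} (G : SimpleGraph (Fin (n + 1)))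
    (d d' : Fin (n + 1) → Fin (n + 1) → Prop) (i : Fin (n + 1)) : Prop :=
  IsSource G d i ∧
    ∀ j k, d' j k ↔ (((j = i ∨ k = i) ∧ d k j) ∨ ((j ≠ i ∧ k ≠ i) ∧ d j k))

/-- Membership in `P₀`: an acyclic orientation of `G` with `0` as a sink. -/
def MemP0 {n : ℕ} (G : SimpleGraph (Fin (n + 1)))
    (d : Fin (n + 1) → Fin (n + 1) → Prop) : Prop :=
  IsAcyclicOrientation G d ∧ IsSink G d 0

/-- One step of the order on `P₀`: fire a single nonzero vertex, staying among
acyclic orientations with `0` as a sink. -/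
def P0Step {n : ℕ} (G : SimpleGraph (Fin (n + 1)))
    (d d' : Fin (n + 1) → Fin (n + 1) → Prop) : Prop :=
  MemP0 G d ∧ MemP0 G d' ∧ ∃ i : Fin (n + 1), i ≠ 0 ∧ FireAt G d d' i

/-- The order relation of `P₀`: `d ≤ d'` iff there is a firing sequence from `d` to `d'`. -/
def P0le {n : ℕ} (G : SimpleGraph (Fin (n + 1)))
    (d d' : Fin (n + 1) → Fin (n + 1) → Prop) : Prop :=
  Relation.ReflTransGen (P0Step G) d d'

/-- The complement `C` of the periodic graphic arrangement of `G`: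
points avoiding all hyperplanes `x i = x j + k` for edges `ij` and integers `k`. -/
def Cset {n : ℕ} (G : SimpleGraph (Fin (n + 1))) : Set (Fin (n + 1) → ℝ) :=
  {x | ∀ i j, G.Adj i j → ∀ k : ℤ, x i ≠ x j + k}

/-- `C₀ = C ∩ {x : x₀ = 0}`. -/
def C0set {n : ℕ} (G : SimpleGraph (Fin (n + 1))) : Set (Fin (n + 1) → ℝ) :=
  {x | x ∈ Cset G ∧ x 0 = 0}

/-- `R` is a region of `S`: a connected component of `S` (in `ℝ^{n+1}`). -/
def IsRegion {n : ℕ} (S R : Set (Fin (n + 1) → ℝ)) : Prop :=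
  ∃ x ∈ S, R = connectedComponentIn S x

/-- The orientation `φ(x)` attached to a point `x`: the edge `ab` is directed
from `a` to `b` (i.e. toward `b`) when `{x b} < {x a}`, where `{·}` is the fractional part. -/
def phiDir {n : ℕ} (G : SimpleGraph (Fin (n + 1))) (x : Fin (n + 1) → ℝ)
    (a b : Fin (n + 1)) : Prop :=
  G.Adj a b ∧ Int.fract (x b) < Int.fract (x a)

/-- Two elements of `P₀` are comparable (an edge of the comparability graph of `P₀`). -/
def ComparableP0 {n : ℕ} (G : SimpleGraph (Fin (n + 1)))
    (d d' : Fin (n + 1) → Fin (n + 1) → Prop) : Prop :=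
  MemP0 G d ∧ MemP0 G d' ∧ (P0le G d d' ∨ P0le G d' d)

/-- `Q` is a connected component of the poset `P₀`: the set of elements joined to
some element of `P₀` by a chain of comparabilities. -/
def IsComponent {n : ℕ} (G : SimpleGraph (Fin (n + 1)))
    (Q : Set (Fin (n + 1) → Fin (n + 1) → Prop)) : Prop :=
  ∃ d, MemP0 G d ∧ Q = {d' | Relation.ReflTransGen (ComparableP0 G) d d'}

/-- `m` is the meet (greatest lower bound) of `a` and `b` inside `Q ⊆ P₀`. -/
def IsMeetIn {n : ℕ} (G : SimpleGraph (Fin (n + 1)))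
    (Q : Set (Fin (n + 1) → Fin (n + 1) → Prop))
    (a b m : Fin (n + 1) → Fin (n + 1) → Prop) : Prop :=
  m ∈ Q ∧ P0le G m a ∧ P0le G m b ∧ ∀ c ∈ Q, P0le G c a → P0le G c b → P0le G c m

/-- `j` is the join (least upper bound) of `a` and `b` inside `Q ⊆ P₀`. -/
def IsJoinIn {n : ℕ} (G : SimpleGraph (Fin (n + 1)))
    (Q : Set (Fin (n + 1) → Fin (n + 1) → Prop))
    (a b j : Fin (n + 1) → Fin (n + 1) → Prop) : Prop :=
  j ∈ Q ∧ P0le G a j ∧ P0le G b j ∧ ∀ c ∈ Q, P0le G a c → P0le G b c → P0le G j c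

open Relation

variable {n : ℕ} {G : SimpleGraph (Fin (n + 1))}

lemma relExt {d d' : Fin (n+1) → Fin (n+1) → Prop} (h : ∀ a b, d a b ↔ d' a b) : d = d' := by
  funext a b; exact propext (h a b)

lemma fract_ne_of_mem_C {x : Fin (n+1) → ℝ} (hx : x ∈ Cset G) {i j : Fin (n+1)}
    (h : G.Adj i j) : Int.fract (x i) ≠ Int.fract (x j) := by
  intro he
  obtain ⟨z, hz⟩ := Int.fract_eq_fract.mp he
  exact hx i j h z (by linarith)

lemma memP0_phi {x : Fin (n+1) → ℝ} (hx : x ∈ C0set G) : MemP0 G (phiDir G x) := by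
  obtain ⟨hxC, hx0⟩ := hx
  refine ⟨⟨⟨fun i j h => h.1, fun i j hadj => ?_⟩, fun v hv => ?_⟩, fun j hadj => ?_⟩
  · constructor
    · rintro ⟨_, hlt⟩ ⟨_, hlt'⟩; linarith
    · intro hn
      refine ⟨hadj, ?_⟩
      rcases lt_or_ge (Int.fract (x j)) (Int.fract (x i)) with h | h
      · exact h
      · rcases eq_or_lt_of_le h with h | h
        · exact absurd h (fract_ne_of_mem_C hxC hadj)
        · exact absurd ⟨hadj.symm, h⟩ hn
  · have : ∀ a b, Relation.TransGen (phiDir G x) a b → Int.fract (x b) < Int.fract (x a) := by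
      intro a b h
      induction h with
      | single h => exact h.2
      | tail _ h ih => exact lt_trans h.2 ih
    exact absurd (this v v hv) (lt_irrefl _)
  · refine ⟨hadj.symm, ?_⟩
    have h0 : Int.fract (x 0) = 0 := by rw [hx0]; exact Int.fract_zero
    rw [h0]
    rcases lt_or_eq_of_le (Int.fract_nonneg (x j)) with h | h
    · exact h
    · exact absurd (h.symm.trans h0.symm) (fract_ne_of_mem_C hxC hadj.symm)

lemma not_d_zero {d : Fin (n+1) → Fin (n+1) → Prop} (hd : MemP0 G d) (j : Fin (n+1)) :
    ¬ d 0 j := by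
  intro h
  have hadj := hd.1.1.1 _ _ h
  have := hd.2 j hadj
  exact ((hd.1.1.2 _ _ hadj).mp h) this
lemma exists_realizer {d : Fin (n+1) → Fin (n+1) → Prop} (hd : MemP0 G d) :
    ∃ x : Fin (n+1) → ℝ, x ∈ C0set G ∧ (∀ j, j ≠ 0 → 0 < Int.fract (x j)) ∧ phiDir G x = d := by
  classical
  set r : Fin (n+1) → ℕ :=
    fun i => (Finset.univ.filter (fun j => Relation.ReflTransGen d i j)).card with hrdef
  have hmono : ∀ i j, d i j → r j < r i := by
    intro i j hij
    apply Finset.card_lt_card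
    rw [Finset.ssubset_iff_of_subset]
    · refine ⟨i, ?_, ?_⟩
      · simp only [Finset.mem_filter, Finset.mem_univ, true_and]
        exact Relation.ReflTransGen.refl
      · simp only [Finset.mem_filter, Finset.mem_univ, true_and]
        intro hji
        exact hd.1.2 i (Relation.TransGen.head' hij hji)
    · intro k hk
      simp only [Finset.mem_filter, Finset.mem_univ, true_and] at hk ⊢
      exact Relation.ReflTransGen.head hij hk
  have hrpos : ∀ i, 0 < r i := fun i =>
    Finset.card_pos.mpr ⟨i, by
      simp only [Finset.mem_filter, Finset.mem_univ, true_and]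
      exact Relation.ReflTransGen.refl⟩
  have hrle : ∀ i, (r i : ℝ) < n + 2 := by
    intro i
    have h1 : r i ≤ n + 1 := le_trans (Finset.card_filter_le _ _) (by simp)
    have : (r i : ℝ) ≤ n + 1 := by exact_mod_cast h1
    linarith
  set x : Fin (n+1) → ℝ := fun i => if i = 0 then 0 else (r i : ℝ) / (n + 2) with hxdef
  have hx0 : x 0 = 0 := by simp [hxdef]
  have hxpos : ∀ i, i ≠ 0 → 0 < x i := by
    intro i hi
    simp only [hxdef, if_neg hi]
    have := hrpos i
    have : (0:ℝ) < r i := by exact_mod_cast this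
    positivity
  have hxval : ∀ i, 0 ≤ x i ∧ x i < 1 := by
    intro i
    by_cases h : i = 0
    · subst h; rw [hx0]; norm_num
    · refine ⟨le_of_lt (hxpos i h), ?_⟩
      simp only [hxdef, if_neg h]
      rw [div_lt_one (by positivity)]
      exact hrle i
  have hfract : ∀ i, Int.fract (x i) = x i := fun i => Int.fract_eq_self.mpr (hxval i)
  have hkey : ∀ p q, d p q → x q < x p := by
    intro p q hpq
    have hp0 : p ≠ 0 := by rintro rfl; exact not_d_zero hd q hpq
    by_cases hq : q = 0
    · subst hq; rw [hx0]; exact hxpos p hp0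
    · simp only [hxdef, if_neg hq, if_neg hp0]
      have := hmono p q hpq
      have hcast : (r q : ℝ) < r p := by exact_mod_cast this
      exact div_lt_div_of_pos_right hcast (by positivity)
  have htot : ∀ i j, G.Adj i j → d i j ∨ d j i := by
    intro i j hadj
    by_cases h : d i j
    · exact Or.inl h
    · exact Or.inr (by_contra fun hn => h ((hd.1.1.2 i j hadj).mpr hn))
  have hne : ∀ i j, G.Adj i j → x i ≠ x j := by
    intro i j hadj
    rcases htot i j hadj with h | h
    · exact (hkey i j h).ne'
    · exact (hkey j i h).ne
  have hxC : x ∈ C0set G := by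
    refine ⟨?_, hx0⟩
    intro i j hadj k heq
    have h1 := (hxval i).1; have h2 := (hxval i).2
    have h3 := (hxval j).1; have h4 := (hxval j).2
    have hk1 : (k:ℝ) < 1 := by linarith
    have hk2 : (-1:ℝ) < k := by linarith
    have hk0 : k = 0 := by
      have a1 : k < 1 := by exact_mod_cast hk1
      have a2 : -1 < k := by exact_mod_cast hk2
      omega
    rw [hk0] at heq
    push_cast at heq
    exact hne i j hadj (by linarith)
  refine ⟨x, hxC, ?_, relExt ?_⟩
  · intro j hj
    rw [hfract]; exact hxpos j hj
  · intro a b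
    constructor
    · rintro ⟨hadj, hlt⟩
      rw [hfract, hfract] at hlt
      rcases htot a b hadj with h | h
      · exact h
      · exact absurd (hkey b a h) (not_lt.mpr (le_of_lt hlt))
    · intro hab
      exact ⟨hd.1.1.1 a b hab, by rw [hfract, hfract]; exact hkey a b hab⟩
lemma fire_source {d : Fin (n+1) → Fin (n+1) → Prop} (hd : MemP0 G d) {a : Fin (n+1)}
    (ha0 : a ≠ 0) (haadj : ¬ G.Adj a 0) (ha : IsSource G d a) :
    MemP0 G (fun j k => ((j = a ∨ k = a) ∧ d k j) ∨ ((j ≠ a ∧ k ≠ a) ∧ d j k)) := by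
  obtain ⟨⟨⟨hsupp, hor⟩, hacy⟩, hsink⟩ := hd
  set d1 : Fin (n+1) → Fin (n+1) → Prop :=
    fun j k => ((j = a ∨ k = a) ∧ d k j) ∨ ((j ≠ a ∧ k ≠ a) ∧ d j k) with hd1def
  have hano : ∀ k, ¬ d1 a k := by
    rintro k (⟨_, hka⟩ | ⟨⟨hja, _⟩, _⟩)
    · exact (hor a k (hsupp k a hka).symm).mp (ha k (hsupp k a hka).symm) hka
    · exact hja rfl
  have e1 : ∀ j, j ≠ a → (d1 a j ↔ d j a) := by
    intro j hj
    constructor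
    · rintro (⟨_, h⟩ | ⟨⟨h, _⟩, _⟩)
      · exact h
      · exact absurd rfl h
    · exact fun h => Or.inl ⟨Or.inl rfl, h⟩
  have e2 : ∀ j, j ≠ a → (d1 j a ↔ d a j) := by
    intro j hj
    constructor
    · rintro (⟨_, h⟩ | ⟨⟨_, h⟩, _⟩)
      · exact h
      · exact absurd rfl h
    · exact fun h => Or.inl ⟨Or.inr rfl, h⟩
  have e3 : ∀ i j, i ≠ a → j ≠ a → (d1 i j ↔ d i j) := by
    intro i j hi hj
    constructor
    · rintro (⟨h, _⟩ | ⟨_, h⟩)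
      · rcases h with h | h
        · exact absurd h hi
        · exact absurd h hj
      · exact h
    · exact fun h => Or.inr ⟨⟨hi, hj⟩, h⟩
  have hsupp1 : ∀ i j, d1 i j → G.Adj i j := by
    rintro i j (⟨_, h⟩ | ⟨_, h⟩)
    · exact (hsupp j i h).symm
    · exact hsupp i j h
  have aux : ∀ v w, Relation.TransGen d1 v w → (w ≠ a → Relation.TransGen d v w ∧ v ≠ a) := by
    intro v w h
    induction h with
    | single h' =>
      intro hw
      by_cases hv : v = a
      · exact absurd h' (hv ▸ hano _)
      · exact ⟨Relation.TransGen.single ((e3 v _ hv hw).mp h'), hv⟩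
    | @tail u w' hvu hstep ih =>
      intro hw'
      by_cases hu : u = a
      · exact absurd hstep (hu ▸ hano w')
      · obtain ⟨tg, hv⟩ := ih hu
        exact ⟨tg.tail ((e3 u w' hu hw').mp hstep), hv⟩
  refine ⟨⟨⟨hsupp1, ?_⟩, ?_⟩, ?_⟩
  · intro i j hadj
    by_cases hi : i = a
    · rw [hi] at hadj ⊢
      have hj : j ≠ a := fun h => G.irrefl (h ▸ hadj)
      rw [e1 j hj, e2 j hj]
      exact hor j a hadj.symm
    · by_cases hj : j = a
      · rw [hj] at hadj ⊢
        rw [e2 i hi, e1 i hi]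
        exact hor a i hadj.symm
      · rw [e3 i j hi hj, e3 j i hj hi]
        exact hor i j hadj
  · intro v hv
    by_cases hva : v = a
    · rw [hva] at hv
      cases hv with
      | single h' => exact hano _ h'
      | @tail u _ h1 h2 =>
        by_cases hu : u = a
        · exact hano _ (hu ▸ h2)
        · exact (aux a u h1 hu).2 rfl
    · exact hacy v (aux v v hv hva).1
  · intro j hadj
    have hj : j ≠ a := fun h => haadj (h ▸ hadj).symm
    have h0a : (0 : Fin (n+1)) ≠ a := fun h => ha0 h.symm
    exact (e3 j 0 hj h0a).mpr (hsink j hadj)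

lemma revA_insert {d : Fin (n+1) → Fin (n+1) → Prop} {a : Fin (n+1)} {S : Finset (Fin (n+1))}
    (ha : a ∉ S)
    (hfalse : ∀ p q, p ∈ insert a S → q ∈ insert a S → ¬ d p q) (j k : Fin (n+1)) :
    (((j ∈ insert a S ∨ k ∈ insert a S) ∧ d k j) ∨ ((j ∉ insert a S ∧ k ∉ insert a S) ∧ d j k))
    ↔ (((j ∈ S ∨ k ∈ S) ∧ (((k = a ∨ j = a) ∧ d j k) ∨ ((k ≠ a ∧ j ≠ a) ∧ d k j))) ∨
      ((j ∉ S ∧ k ∉ S) ∧ (((j = a ∨ k = a) ∧ d k j) ∨ ((j ≠ a ∧ k ≠ a) ∧ d j k)))) := by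
  classical
  have f1 := hfalse j k
  have f2 := hfalse k j
  simp only [Finset.mem_insert] at f1 f2 ⊢
  by_cases hj : j = a <;> by_cases hk : k = a <;> by_cases hjS : j ∈ S <;>
    by_cases hkS : k ∈ S <;> simp_all

lemma fire_finset (S : Finset (Fin (n+1))) :
    ∀ {d : Fin (n+1) → Fin (n+1) → Prop}, MemP0 G d →
    (∀ a ∈ S, a ≠ 0 ∧ ¬ G.Adj a 0 ∧ IsSource G d a) →
    (∀ a ∈ S, ∀ b ∈ S, a ≠ b → ¬ G.Adj a b) →
    Relation.ReflTransGen (P0Step G) d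
      (fun j k => ((j ∈ S ∨ k ∈ S) ∧ d k j) ∨ ((j ∉ S ∧ k ∉ S) ∧ d j k)) := by
  classical
  induction S using Finset.induction with
  | empty =>
    intro d hd _ _
    have heq : (fun j k => (((j : Fin (n+1)) ∈ (∅ : Finset (Fin (n+1))) ∨ k ∈ (∅ : Finset (Fin (n+1)))) ∧ d k j) ∨ ((j ∉ (∅ : Finset (Fin (n+1))) ∧ k ∉ (∅ : Finset (Fin (n+1)))) ∧ d j k)) = d := by
      apply relExt; intro a b; simp
    rw [heq]
  | @insert a S ha ih =>
    intro d hd hS hind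
    obtain ⟨ha0, haadj, hasrc⟩ := hS a (Finset.mem_insert_self a S)
    set d1 : Fin (n+1) → Fin (n+1) → Prop :=
      fun j k => ((j = a ∨ k = a) ∧ d k j) ∨ ((j ≠ a ∧ k ≠ a) ∧ d j k) with hd1def
    have hd1 : MemP0 G d1 := fire_source hd ha0 haadj hasrc
    have hstep : P0Step G d d1 := ⟨hd, hd1, a, ha0, hasrc, fun j k => Iff.rfl⟩
    have hfalse : ∀ p q, p ∈ insert a S → q ∈ insert a S → ¬ d p q := by
      intro p q hp hq hpq
      have hadj := hd.1.1.1 _ _ hpq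
      by_cases hpq' : p = q
      · exact G.irrefl (hpq' ▸ hadj)
      · exact hind p hp q hq hpq' hadj
    have hS' : ∀ s ∈ S, s ≠ 0 ∧ ¬ G.Adj s 0 ∧ IsSource G d1 s := by
      intro s hs
      obtain ⟨hs0, hsadj, hssrc⟩ := hS s (Finset.mem_insert_of_mem hs)
      refine ⟨hs0, hsadj, fun j hadj => ?_⟩
      have hsa : s ≠ a := fun h => ha (h ▸ hs)
      have hja : j ≠ a := by
        intro h
        exact hind s (Finset.mem_insert_of_mem hs) a (Finset.mem_insert_self a S) hsa (h ▸ hadj)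
      exact Or.inr ⟨⟨hsa, hja⟩, hssrc j hadj⟩
    have hind' : ∀ p ∈ S, ∀ q ∈ S, p ≠ q → ¬ G.Adj p q := fun p hp q hq =>
      hind p (Finset.mem_insert_of_mem hp) q (Finset.mem_insert_of_mem hq)
    have hchain := ih hd1 hS' hind'
    have heq : (fun (j k : Fin (n+1)) => ((j ∈ insert a S ∨ k ∈ insert a S) ∧ d k j) ∨
        ((j ∉ insert a S ∧ k ∉ insert a S) ∧ d j k)) =
        (fun j k => ((j ∈ S ∨ k ∈ S) ∧ d1 k j) ∨ ((j ∉ S ∧ k ∉ S) ∧ d1 j k)) :=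
      relExt (revA_insert ha hfalse)
    rw [heq]
    exact Relation.ReflTransGen.head hstep hchain
lemma seg_mem_component {x y : Fin (n+1) → ℝ}
    (h : ∀ s : ℝ, s ∈ Set.Icc (0:ℝ) 1 → (fun j => x j + s * (y j - x j)) ∈ C0set G) :
    y ∈ connectedComponentIn (C0set G) x := by
  set f : ℝ → (Fin (n+1) → ℝ) := fun s => fun j => x j + s * (y j - x j) with hf
  have hcont : Continuous f := by
    apply continuous_pi
    intro j
    exact continuous_const.add (continuous_id.mul continuous_const)
  have hpre : IsPreconnected (f '' Set.Icc 0 1) :=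
    isPreconnected_Icc.image f hcont.continuousOn
  have hx : x ∈ f '' Set.Icc 0 1 := ⟨0, by norm_num, by funext j; simp [hf]⟩
  have hy : y ∈ f '' Set.Icc 0 1 := ⟨1, by norm_num, by funext j; simp [hf]⟩
  have hsub : f '' Set.Icc 0 1 ⊆ C0set G := by
    rintro _ ⟨s, hs, rfl⟩
    exact h s hs
  exact hpre.subset_connectedComponentIn hx hsub hy

lemma mem_uIcc_of_seg {a b : ℝ} {s : ℝ} (hs : s ∈ Set.Icc (0:ℝ) 1) :
    a + s * (b - a) ∈ Set.uIcc a b := by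
  obtain ⟨h0, h1⟩ := hs
  rcases le_total a b with h | h
  · rw [Set.uIcc_of_le h]
    constructor <;> nlinarith
  · rw [Set.uIcc_of_ge h]
    constructor <;> nlinarith

lemma move_coord {x : Fin (n+1) → ℝ} (hx : x ∈ C0set G) {i : Fin (n+1)} (hi : i ≠ 0) (t : ℝ)
    (h : ∀ j, G.Adj i j → ∀ k : ℤ, (x j + k) ∉ Set.uIcc (x i) t) :
    Function.update x i t ∈ C0set G ∧
      Function.update x i t ∈ connectedComponentIn (C0set G) x := by
  classical
  have hseg : ∀ s : ℝ, s ∈ Set.Icc (0:ℝ) 1 →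
      (fun j => x j + s * (Function.update x i t j - x j)) ∈ C0set G := by
    intro s hs
    have hval : ∀ j, j ≠ i → x j + s * (Function.update x i t j - x j) = x j := by
      intro j hj
      rw [Function.update_of_ne hj]
      ring
    have hvali : x i + s * (Function.update x i t i - x i) ∈ Set.uIcc (x i) t := by
      rw [Function.update_self]
      exact mem_uIcc_of_seg hs
    constructor
    · intro a b hadj k heq
      replace heq : x a + s * (Function.update x i t a - x a)
          = x b + s * (Function.update x i t b - x b) + k := heq
      by_cases hai : a = i
      · by_cases hbi : b = i
        · exact G.irrefl (hbi ▸ hai ▸ hadj)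
        · rw [hai] at heq hadj
          rw [hval b hbi] at heq
          rw [heq] at hvali
          exact h b hadj k hvali
      · by_cases hbi : b = i
        · rw [hbi] at heq hadj
          rw [hval a hai] at heq
          refine h a hadj.symm (-k) ?_
          have hcast : x a + ((-k : ℤ) : ℝ) = x i + s * (Function.update x i t i - x i) := by
            push_cast
            linarith
          rw [hcast]
          exact hvali
        · rw [hval a hai, hval b hbi] at heq
          exact hx.1 a b hadj k heq
    · show x 0 + s * (Function.update x i t 0 - x 0) = 0
      rw [hval 0 (fun h => hi h.symm)]
      exact hx.2
  have hend : Function.update x i t ∈ C0set G := by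
    have := hseg 1 (by norm_num)
    have heq : (fun j => x j + 1 * (Function.update x i t j - x j)) = Function.update x i t := by
      funext j; ring
    rwa [heq] at this
  exact ⟨hend, seg_mem_component hseg⟩
lemma step_realize_fwd {x : Fin (n+1) → ℝ} (hx : x ∈ C0set G)
    (hpos : ∀ j, j ≠ 0 → 0 < Int.fract (x j))
    {e : Fin (n+1) → Fin (n+1) → Prop} (hstep : P0Step G (phiDir G x) e) :
    ∃ y, y ∈ C0set G ∧ y ∈ connectedComponentIn (C0set G) x ∧
      (∀ j, j ≠ 0 → 0 < Int.fract (y j)) ∧ phiDir G y = e := by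
  classical
  obtain ⟨hd1, he, i, hi0, hsrc, hspec⟩ := hstep
  have hnadj0 : ¬ G.Adj i 0 := by
    intro hadj
    have h1 : e i 0 := he.2 i hadj.symm
    have h2 : ¬ phiDir G x 0 i := by
      rintro ⟨_, hlt⟩
      have hf0 : Int.fract (x 0) = 0 := by rw [hx.2]; exact Int.fract_zero
      have := Int.fract_nonneg (x i)
      rw [hf0] at hlt
      linarith
    rcases (hspec i 0).mp h1 with ⟨_, h⟩ | ⟨⟨hii, _⟩, _⟩
    · exact h2 h
    · exact hii rfl
  have hnbr : ∀ j, G.Adj i j →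
      j ≠ 0 ∧ 0 < Int.fract (x j) ∧ Int.fract (x j) < Int.fract (x i) := by
    intro j hadj
    have hj0 : j ≠ 0 := by rintro rfl; exact hnadj0 hadj
    exact ⟨hj0, hpos j hj0, (hsrc j hadj).2⟩
  set m : ℝ := Finset.univ.inf' ⟨0, Finset.mem_univ 0⟩
      (fun j => if G.Adj i j then Int.fract (x j) else 1) with hm
  have hmpos : 0 < m := by
    rw [hm]; refine (Finset.lt_inf'_iff _).2 ?_
    intro j _
    by_cases h : G.Adj i j
    · simp only [if_pos h]; exact (hnbr j h).2.1
    · simp only [if_neg h]; norm_num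
  have hmle : ∀ j, G.Adj i j → m ≤ Int.fract (x j) := by
    intro j h
    have h2 := Finset.inf'_le (s := (Finset.univ : Finset (Fin (n+1))))
      (fun j => if G.Adj i j then Int.fract (x j) else 1) (Finset.mem_univ j)
    rwa [if_pos h] at h2
  have hm1 : m ≤ 1 := by
    have h2 := Finset.inf'_le (s := (Finset.univ : Finset (Fin (n+1))))
      (fun j => if G.Adj i j then Int.fract (x j) else 1) (Finset.mem_univ i)
    rwa [if_neg (G.irrefl)] at h2
  set ε : ℝ := m / 2 with hεdef
  have hε0 : 0 < ε := by rw [hεdef]; linarith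
  have hε1 : ε < 1 := by rw [hεdef]; linarith
  have hεlt : ∀ j, G.Adj i j → ε < Int.fract (x j) := by
    intro j h
    have := hmle j h
    rw [hεdef]; linarith
  set t : ℝ := (⌊x i⌋ : ℝ) + 1 + ε with ht
  have hfloori : (⌊x i⌋ : ℝ) + Int.fract (x i) = x i := Int.floor_add_fract (x i)
  have hxit : x i ≤ t := by
    have := Int.fract_lt_one (x i)
    rw [ht]; linarith
  have huIcc : ∀ j, G.Adj i j → ∀ k : ℤ, x j + k ∉ Set.uIcc (x i) t := by
    intro j hadj k hmem
    rw [Set.uIcc_of_le hxit] at hmem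
    obtain ⟨hlo, hhi⟩ := hmem
    have hfloorj : (⌊x j⌋ : ℝ) + Int.fract (x j) = x j := Int.floor_add_fract (x j)
    obtain ⟨_, hfj0, hfjlt⟩ := hnbr j hadj
    set K : ℤ := ⌊x j⌋ + k - ⌊x i⌋ with hK
    have hKr : (K : ℝ) = (⌊x j⌋ : ℝ) + k - ⌊x i⌋ := by rw [hK]; push_cast; ring
    have hKpos : 0 < K := by
      have : (0:ℝ) < K := by rw [hKr]; linarith
      exact_mod_cast this
    have hK1 : (1:ℝ) ≤ K := by exact_mod_cast hKpos
    have hεj := hεlt j hadj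
    rw [ht] at hhi
    rw [hKr] at hK1
    linarith
  obtain ⟨hyC, hycomp⟩ := move_coord hx hi0 t huIcc
  set y : Fin (n+1) → ℝ := Function.update x i t with hy
  have hyi : Int.fract (y i) = ε := by
    rw [hy, Function.update_self, ht]
    have h2 : (⌊x i⌋ : ℝ) + 1 + ε = ((⌊x i⌋ + 1 : ℤ) : ℝ) + ε := by push_cast; ring
    rw [h2, Int.fract_intCast_add, Int.fract_eq_self.mpr ⟨le_of_lt hε0, hε1⟩]
  have hyj : ∀ j, j ≠ i → y j = x j := fun j hj => Function.update_of_ne hj t x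
  refine ⟨y, hyC, hycomp, ?_, relExt ?_⟩
  · intro j hj0
    by_cases hji : j = i
    · rw [hji, hyi]; exact hε0
    · rw [hyj j hji]; exact hpos j hj0
  · intro a b
    rw [hspec a b]
    by_cases hai : a = i
    · rw [hai]
      by_cases hbi : b = i
      · rw [hbi]
        constructor
        · rintro ⟨hadj, _⟩; exact absurd hadj G.irrefl
        · rintro (⟨_, ⟨hadj, _⟩⟩ | ⟨⟨hii, _⟩, _⟩)
          · exact absurd hadj G.irrefl
          · exact absurd rfl hii
      · constructor
        · rintro ⟨hadj, hlt⟩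
          rw [hyi, hyj b hbi] at hlt
          exact absurd hlt (not_lt.mpr (le_of_lt (hεlt b hadj)))
        · rintro (⟨_, ⟨hadj, hlt⟩⟩ | ⟨⟨hii, _⟩, _⟩)
          · exact absurd hlt (not_lt.mpr (le_of_lt (hnbr b hadj.symm).2.2))
          · exact absurd rfl hii
    · by_cases hbi : b = i
      · rw [hbi]
        constructor
        · rintro ⟨hadj, _⟩
          exact Or.inl ⟨Or.inr rfl, hadj.symm, (hnbr a hadj.symm).2.2⟩
        · rintro (⟨_, ⟨hadj, _⟩⟩ | ⟨⟨_, hii⟩, _⟩)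
          · refine ⟨hadj.symm, ?_⟩
            rw [hyi, hyj a hai]
            exact hεlt a hadj
          · exact absurd rfl hii
      · constructor
        · rintro ⟨hadj, hlt⟩
          rw [hyj a hai, hyj b hbi] at hlt
          exact Or.inr ⟨⟨hai, hbi⟩, hadj, hlt⟩
        · rintro (⟨hor, _⟩ | ⟨_, ⟨hadj, hlt⟩⟩)
          · rcases hor with h | h
            · exact absurd h hai
            · exact absurd h hbi
          · exact ⟨hadj, by rw [hyj a hai, hyj b hbi]; exact hlt⟩

lemma step_realize_rev {x : Fin (n+1) → ℝ} (hx : x ∈ C0set G)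
    (hpos : ∀ j, j ≠ 0 → 0 < Int.fract (x j))
    {e : Fin (n+1) → Fin (n+1) → Prop} (hstep : P0Step G e (phiDir G x)) :
    ∃ y, y ∈ C0set G ∧ y ∈ connectedComponentIn (C0set G) x ∧
      (∀ j, j ≠ 0 → 0 < Int.fract (y j)) ∧ phiDir G y = e := by
  classical
  obtain ⟨he, hd1, i, hi0, hsrc, hspec⟩ := hstep
  have hsnk : ∀ j, G.Adj i j → Int.fract (x i) < Int.fract (x j) := by
    intro j hadj
    have : phiDir G x j i := (hspec j i).mpr (Or.inl ⟨Or.inr rfl, hsrc j hadj⟩)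
    exact this.2
  have hnadj0 : ¬ G.Adj i 0 := by
    intro hadj
    have hd1mem : MemP0 G (phiDir G x) := memP0_phi hx
    have h1 : phiDir G x i 0 := hd1mem.2 i hadj.symm
    rcases (hspec i 0).mp h1 with ⟨_, h⟩ | ⟨⟨hii, _⟩, _⟩
    · exact ((he.1.1.2 0 i hadj.symm).mp h) (hsrc 0 hadj)
    · exact hii rfl
  have hnbr : ∀ j, G.Adj i j → j ≠ 0 ∧ 0 < Int.fract (x j) := by
    intro j hadj
    have hj0 : j ≠ 0 := by rintro rfl; exact hnadj0 hadj
    exact ⟨hj0, hpos j hj0⟩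
  set m : ℝ := Finset.univ.inf' ⟨0, Finset.mem_univ 0⟩
      (fun j => if G.Adj i j then 1 - Int.fract (x j) else 1) with hm
  have hmpos : 0 < m := by
    rw [hm]; refine (Finset.lt_inf'_iff _).2 ?_
    intro j _
    by_cases h : G.Adj i j
    · simp only [if_pos h]
      have := Int.fract_lt_one (x j)
      linarith
    · simp only [if_neg h]; norm_num
  have hmle : ∀ j, G.Adj i j → m ≤ 1 - Int.fract (x j) := by
    intro j h
    have h2 := Finset.inf'_le (s := (Finset.univ : Finset (Fin (n+1))))
      (fun j => if G.Adj i j then 1 - Int.fract (x j) else 1) (Finset.mem_univ j)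
    rwa [if_pos h] at h2
  have hm1 : m ≤ 1 := by
    have h2 := Finset.inf'_le (s := (Finset.univ : Finset (Fin (n+1))))
      (fun j => if G.Adj i j then 1 - Int.fract (x j) else 1) (Finset.mem_univ i)
    rwa [if_neg (G.irrefl)] at h2
  set ε : ℝ := m / 2 with hεdef
  have hε0 : 0 < ε := by rw [hεdef]; linarith
  have hε1 : ε < 1 := by rw [hεdef]; linarith
  have hεlt : ∀ j, G.Adj i j → Int.fract (x j) < 1 - ε := by
    intro j h
    have := hmle j h
    rw [hεdef]; linarith
  set t : ℝ := (⌊x i⌋ : ℝ) - ε with ht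
  have hfloori : (⌊x i⌋ : ℝ) + Int.fract (x i) = x i := Int.floor_add_fract (x i)
  have hxit : t ≤ x i := by
    have := Int.fract_nonneg (x i)
    rw [ht]; linarith
  have huIcc : ∀ j, G.Adj i j → ∀ k : ℤ, x j + k ∉ Set.uIcc (x i) t := by
    intro j hadj k hmem
    rw [Set.uIcc_of_ge hxit] at hmem
    obtain ⟨hlo, hhi⟩ := hmem
    have hfloorj : (⌊x j⌋ : ℝ) + Int.fract (x j) = x j := Int.floor_add_fract (x j)
    have hfij := hsnk j hadj
    set K : ℤ := ⌊x j⌋ + k - ⌊x i⌋ with hK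
    have hKr : (K : ℝ) = (⌊x j⌋ : ℝ) + k - ⌊x i⌋ := by rw [hK]; push_cast; ring
    have hKneg : K < 0 := by
      have : (K:ℝ) < 0 := by rw [hKr]; linarith
      exact_mod_cast this
    have hK1 : (K:ℝ) ≤ -1 := by
      have : K ≤ -1 := by omega
      exact_mod_cast this
    have hεj := hεlt j hadj
    rw [ht] at hlo
    linarith
  obtain ⟨hyC, hycomp⟩ := move_coord hx hi0 t huIcc
  set y : Fin (n+1) → ℝ := Function.update x i t with hy
  have hfε : Int.fract ε = ε := Int.fract_eq_self.mpr ⟨le_of_lt hε0, hε1⟩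
  have hyi : Int.fract (y i) = 1 - ε := by
    rw [hy, Function.update_self, ht]
    have h2 : (⌊x i⌋ : ℝ) - ε = ((⌊x i⌋ : ℤ) : ℝ) + (-ε) := by push_cast; ring
    rw [h2, Int.fract_intCast_add, Int.fract_neg (by rw [hfε]; exact ne_of_gt hε0), hfε]
  have hyj : ∀ j, j ≠ i → y j = x j := fun j hj => Function.update_of_ne hj t x
  refine ⟨y, hyC, hycomp, ?_, relExt ?_⟩
  · intro j hj0
    by_cases hji : j = i
    · rw [hji, hyi]; linarith
    · rw [hyj j hji]; exact hpos j hj0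
  · intro a b
    by_cases hai : a = i
    · rw [hai]
      by_cases hbi : b = i
      · rw [hbi]
        constructor
        · rintro ⟨hadj, _⟩; exact absurd hadj G.irrefl
        · intro h; exact absurd (he.1.1.1 i i h) G.irrefl
      · constructor
        · rintro ⟨hadj, _⟩; exact hsrc b hadj
        · intro h
          have hadj := he.1.1.1 i b h
          refine ⟨hadj, ?_⟩
          rw [hyi, hyj b hbi]
          exact hεlt b hadj
    · by_cases hbi : b = i
      · rw [hbi]
        constructor
        · rintro ⟨hadj, hlt⟩
          rw [hyi, hyj a hai] at hlt
          exact absurd hlt (not_lt.mpr (le_of_lt (hεlt a hadj.symm)))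
        · intro h
          have hadj := he.1.1.1 a i h
          exact absurd (hsrc a hadj.symm) ((he.1.1.2 a i hadj).mp h)
      · constructor
        · rintro ⟨hadj, hlt⟩
          rw [hyj a hai, hyj b hbi] at hlt
          rcases (hspec a b).mp ⟨hadj, hlt⟩ with ⟨hor, _⟩ | ⟨_, h⟩
          · rcases hor with h | h
            · exact absurd h hai
            · exact absurd h hbi
          · exact h
        · intro h
          have h2 : phiDir G x a b := (hspec a b).mpr (Or.inr ⟨⟨hai, hbi⟩, h⟩)
          exact ⟨h2.1, by rw [hyj a hai, hyj b hbi]; exact h2.2⟩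
lemma local_comparable {z : Fin (n+1) → ℝ} (hz : z ∈ C0set G) :
    ∃ ε : ℝ, 0 < ε ∧ ∀ w, w ∈ C0set G → (∀ j, |w j - z j| < ε) →
      Relation.ReflTransGen (P0Step G) (phiDir G w) (phiDir G z) := by
  classical
  set f : Fin (n+1) → ℝ := fun j => Int.fract (z j) with hfdef
  have hfz : ∀ i, f i = Int.fract (z i) := fun i => rfl
  have hf01 : ∀ i, 0 ≤ f i ∧ f i < 1 := fun i => ⟨Int.fract_nonneg _, Int.fract_lt_one _⟩
  have hf0 : f 0 = 0 := by rw [hfz, hz.2, Int.fract_zero]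
  have hfne : ∀ i j, G.Adj i j → f i ≠ f j := fun i j h => fract_ne_of_mem_C hz.1 h
  have hzna : ∀ i j, G.Adj i j → f i = 0 → f j ≠ 0 := by
    intro i j hadj hi hj
    exact hfne i j hadj (hi.trans hj.symm)
  set δ1 : ℝ := Finset.univ.inf' ⟨0, Finset.mem_univ 0⟩
    (fun i => if f i = 0 then 1 else min (f i) (1 - f i)) with hδ1
  set δ2 : ℝ := Finset.univ.inf' ⟨0, Finset.mem_univ 0⟩
    (fun i => Finset.univ.inf' ⟨0, Finset.mem_univ 0⟩
      (fun j => if G.Adj i j ∧ f i ≠ 0 ∧ f j ≠ 0 then |f i - f j| else 1)) with hδ2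
  set δ : ℝ := min δ1 (min δ2 1) with hδdef
  have hδ1pos : 0 < δ1 := by
    rw [hδ1]; refine (Finset.lt_inf'_iff _).2 ?_
    intro i _
    by_cases h : f i = 0
    · simp [h]
    · rw [if_neg h]
      refine lt_min (lt_of_le_of_ne (hf01 i).1 (Ne.symm h)) (by linarith [(hf01 i).2])
  have hδ2pos : 0 < δ2 := by
    rw [hδ2]; refine (Finset.lt_inf'_iff _).2 ?_
    intro i _
    refine (Finset.lt_inf'_iff _).2 ?_
    intro j _
    by_cases h : G.Adj i j ∧ f i ≠ 0 ∧ f j ≠ 0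
    · rw [if_pos h]
      exact abs_pos.mpr (sub_ne_zero.mpr (hfne i j h.1))
    · rw [if_neg h]; norm_num
  have hδpos : 0 < δ := lt_min hδ1pos (lt_min hδ2pos one_pos)
  refine ⟨δ/3, by linarith, ?_⟩
  intro w hw hclose
  set ε : ℝ := δ/3 with hεdef
  have hεpos : 0 < ε := by rw [hεdef]; linarith
  have hεδ : 3*ε = δ := by rw [hεdef]; ring
  have hδ1le : ∀ i, f i ≠ 0 → 3*ε ≤ f i ∧ 3*ε ≤ 1 - f i := by
    intro i h
    have h2 := Finset.inf'_le (s := (Finset.univ : Finset (Fin (n+1))))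
      (fun i => if f i = 0 then 1 else min (f i) (1 - f i)) (Finset.mem_univ i)
    rw [if_neg h] at h2
    have hh : δ ≤ min (f i) (1 - f i) := le_trans (min_le_left _ _) h2
    rw [hεδ]
    exact ⟨le_trans hh (min_le_left _ _), le_trans hh (min_le_right _ _)⟩
  have hδ2le : ∀ i j, G.Adj i j → f i ≠ 0 → f j ≠ 0 → 3*ε ≤ |f i - f j| := by
    intro i j hadj hi hj
    have h2 := Finset.inf'_le (s := (Finset.univ : Finset (Fin (n+1))))
      (fun i => Finset.univ.inf' ⟨0, Finset.mem_univ 0⟩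
        (fun j => if G.Adj i j ∧ f i ≠ 0 ∧ f j ≠ 0 then |f i - f j| else 1))
      (Finset.mem_univ i)
    have h3 := Finset.inf'_le (s := (Finset.univ : Finset (Fin (n+1))))
      (fun j => if G.Adj i j ∧ f i ≠ 0 ∧ f j ≠ 0 then |f i - f j| else 1) (Finset.mem_univ j)
    rw [if_pos ⟨hadj, hi, hj⟩] at h3
    have : δ ≤ δ2 := le_trans (min_le_right _ _) (min_le_left _ _)
    rw [hεδ]
    exact le_trans this (le_trans h2 h3)
  -- fract of w at vertices with nonzero fract of z
  have key1 : ∀ i, f i ≠ 0 → Int.fract (w i) = f i + (w i - z i) := by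
    intro i h
    obtain ⟨h1, h2⟩ := hδ1le i h
    obtain ⟨hc1, hc2⟩ := abs_lt.mp (hclose i)
    have hfl : (⌊z i⌋ : ℝ) = z i - f i := by
      rw [hfz]; rw [← Int.self_sub_floor (z i)]; ring
    have hfloor : ⌊w i⌋ = ⌊z i⌋ := by
      rw [Int.floor_eq_iff]
      constructor
      · rw [hfl]; linarith
      · rw [hfl]; linarith
    rw [← Int.self_sub_floor (w i), hfloor, hfl]
    ring
  have hwB : ∀ i, f i ≠ 0 → |Int.fract (w i) - f i| < ε := by
    intro i h
    rw [key1 i h]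
    have := hclose i
    rwa [show f i + (w i - z i) - f i = w i - z i by ring]
  set A : Finset (Fin (n+1)) := Finset.univ.filter (fun i => f i = 0 ∧ w i < z i) with hA
  have hmemA : ∀ i, i ∈ A ↔ (f i = 0 ∧ w i < z i) := by
    intro i; rw [hA, Finset.mem_filter]; simp
  have hzf : ∀ i, f i = 0 → (⌊z i⌋ : ℝ) = z i := by
    intro i h
    have := Int.self_sub_floor (z i)
    rw [← hfz, h] at this
    linarith
  have hwA : ∀ i ∈ A, 1 - ε < Int.fract (w i) := by
    intro i hi
    obtain ⟨hfi, hlt⟩ := (hmemA i).mp hi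
    obtain ⟨hc1, hc2⟩ := abs_lt.mp (hclose i)
    have hfl := hzf i hfi
    have hfloor : ⌊w i⌋ = ⌊z i⌋ - 1 := by
      rw [Int.floor_eq_iff]
      push_cast
      constructor
      · rw [hfl]
        have : ε ≤ 1 := by
          have : δ ≤ 1 := le_trans (min_le_right _ _) (min_le_right _ _)
          rw [hεdef]; linarith
        linarith
      · rw [hfl]; linarith
    have : Int.fract (w i) = w i - ((⌊z i⌋ : ℝ) - 1) := by
      rw [← Int.self_sub_floor (w i), hfloor]
      push_cast; ring
    rw [this, hfl]
    linarith
  have hwA' : ∀ i, f i = 0 → i ∉ A → Int.fract (w i) < ε := by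
    intro i hfi hiA
    have hge : z i ≤ w i := by
      by_contra hlt
      exact hiA ((hmemA i).mpr ⟨hfi, not_le.mp hlt⟩)
    obtain ⟨hc1, hc2⟩ := abs_lt.mp (hclose i)
    have hfl := hzf i hfi
    have hfloor : ⌊w i⌋ = ⌊z i⌋ := by
      rw [Int.floor_eq_iff]
      constructor
      · rw [hfl]; linarith
      · rw [hfl]
        have : ε ≤ 1 := by
          have : δ ≤ 1 := le_trans (min_le_right _ _) (min_le_right _ _)
          rw [hεdef]; linarith
        linarith
    have : Int.fract (w i) = w i - (⌊z i⌋ : ℝ) := by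
      rw [← Int.self_sub_floor (w i), hfloor]
    rw [this, hfl]
    linarith
  -- apply the firing lemma
  have hchain := fire_finset (G := G) A (memP0_phi hw) ?_ ?_
  rotate_left
  · intro a ha
    obtain ⟨hfa, _⟩ := (hmemA a).mp ha
    have ha0 : a ≠ 0 := by
      rintro rfl
      obtain ⟨_, hlt⟩ := (hmemA 0).mp ha
      rw [hw.2, hz.2] at hlt
      exact lt_irrefl _ hlt
    have hnadj : ¬ G.Adj a 0 := fun hadj => hzna a 0 hadj hfa hf0
    refine ⟨ha0, hnadj, fun j hadj => ⟨hadj, ?_⟩⟩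
    have hfj : f j ≠ 0 := hzna a j hadj hfa
    have hb := abs_lt.mp (hwB j hfj)
    have h1 := (hδ1le j hfj).2
    have h2 := hwA a ha
    linarith [hb.2]
  · intro a ha b hb hne hadj
    exact hzna a b hadj ((hmemA a).mp ha).1 ((hmemA b).mp hb).1
  · have heq : (fun j k => ((j ∈ A ∨ k ∈ A) ∧ phiDir G w k j) ∨
        ((j ∉ A ∧ k ∉ A) ∧ phiDir G w j k)) = phiDir G z := by
      apply relExt
      intro a b
      by_cases hadj : G.Adj a b
      · by_cases hfa : f a = 0
        · have hfb : f b ≠ 0 := hzna a b hadj hfa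
          have hbA : b ∉ A := fun h => hfb ((hmemA b).mp h).1
          have hRHS : ¬ phiDir G z a b := by
            rintro ⟨_, hlt⟩
            rw [← hfz, ← hfz, hfa] at hlt
            exact absurd hlt (not_lt.mpr (hf01 b).1)
          have hbB := abs_lt.mp (hwB b hfb)
          have hb1 := hδ1le b hfb
          by_cases haA : a ∈ A
          · have hwa := hwA a haA
            constructor
            · rintro (⟨_, ⟨_, hlt⟩⟩ | ⟨⟨haA', _⟩, _⟩)
              · exact absurd hlt (by push_neg; linarith [hbB.2, hb1.2])
              · exact absurd haA haA'
            · intro hzab; exact absurd hzab hRHS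
          · have hwa := hwA' a hfa haA
            constructor
            · rintro (⟨hor, _⟩ | ⟨_, ⟨_, hlt⟩⟩)
              · rcases hor with h | h
                · exact absurd h haA
                · exact absurd h hbA
              · exact absurd hlt (by push_neg; linarith [hbB.1, hb1.1])
            · intro hzab; exact absurd hzab hRHS
        · by_cases hfb : f b = 0
          · have haA : a ∉ A := fun h => hfa ((hmemA a).mp h).1
            have hRHS : phiDir G z a b := by
              refine ⟨hadj, ?_⟩
              rw [← hfz, ← hfz, hfb]
              exact lt_of_le_of_ne (hf01 a).1 (Ne.symm hfa)
            have haB := abs_lt.mp (hwB a hfa)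
            have ha1 := hδ1le a hfa
            by_cases hbA : b ∈ A
            · have hwb := hwA b hbA
              exact ⟨fun _ => hRHS,
                fun _ => Or.inl ⟨Or.inr hbA, hadj.symm, by linarith [haB.2, ha1.2]⟩⟩
            · have hwb := hwA' b hfb hbA
              exact ⟨fun _ => hRHS,
                fun _ => Or.inr ⟨⟨haA, hbA⟩, hadj, by linarith [haB.1, ha1.1]⟩⟩
          · have haA : a ∉ A := fun h => hfa ((hmemA a).mp h).1
            have hbA : b ∉ A := fun h => hfb ((hmemA b).mp h).1
            have haB := abs_lt.mp (hwB a hfa)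
            have hbB := abs_lt.mp (hwB b hfb)
            have hsep := hδ2le a b hadj hfa hfb
            constructor
            · rintro (⟨hor, _⟩ | ⟨_, ⟨_, hlt⟩⟩)
              · rcases hor with h | h
                · exact absurd h haA
                · exact absurd h hbA
              · refine ⟨hadj, ?_⟩
                rw [← hfz, ← hfz]
                by_contra hge
                push_neg at hge
                have hne' : f a ≠ f b := hfne a b hadj
                have : f a < f b := lt_of_le_of_ne (by rw [hfz, hfz] at *; exact hge) hne'
                rw [abs_of_neg (by linarith)] at hsep
                linarith
            · rintro ⟨_, hlt⟩
              rw [← hfz, ← hfz] at hlt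
              rw [abs_of_pos (by linarith)] at hsep
              exact Or.inr ⟨⟨haA, hbA⟩, hadj, by linarith⟩
      · have hna : ¬ G.Adj b a := fun h => hadj h.symm
        constructor
        · rintro (⟨_, ⟨h, _⟩⟩ | ⟨_, ⟨h, _⟩⟩)
          · exact absurd h hna
          · exact absurd h hadj
        · rintro ⟨h, _⟩
          exact absurd h hadj
    rwa [heq] at hchain
lemma up_chain {e e' : Fin (n+1) → Fin (n+1) → Prop}
    (h : Relation.ReflTransGen (P0Step G) e e') :
    ∀ y, y ∈ C0set G → (∀ j, j ≠ 0 → 0 < Int.fract (y j)) → phiDir G y = e →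
    ∃ y', y' ∈ C0set G ∧ y' ∈ connectedComponentIn (C0set G) y ∧
      (∀ j, j ≠ 0 → 0 < Int.fract (y' j)) ∧ phiDir G y' = e' := by
  induction h with
  | refl => exact fun y hy hpos hphi => ⟨y, hy, mem_connectedComponentIn hy, hpos, hphi⟩
  | @tail b c h1 h2 ih =>
    intro y hy hpos hphi
    obtain ⟨y1, hy1, hy1comp, hy1pos, hy1phi⟩ := ih y hy hpos hphi
    rw [← hy1phi] at h2
    obtain ⟨y2, hy2, hy2comp, hy2pos, hy2phi⟩ := step_realize_fwd hy1 hy1pos h2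
    rw [← connectedComponentIn_eq hy1comp] at hy2comp
    exact ⟨y2, hy2, hy2comp, hy2pos, hy2phi⟩

lemma down_chain {e e' : Fin (n+1) → Fin (n+1) → Prop}
    (h : Relation.ReflTransGen (P0Step G) e e') :
    ∀ y, y ∈ C0set G → (∀ j, j ≠ 0 → 0 < Int.fract (y j)) → phiDir G y = e' →
    ∃ y', y' ∈ C0set G ∧ y' ∈ connectedComponentIn (C0set G) y ∧
      (∀ j, j ≠ 0 → 0 < Int.fract (y' j)) ∧ phiDir G y' = e := by
  induction h with
  | refl => exact fun y hy hpos hphi => ⟨y, hy, mem_connectedComponentIn hy, hpos, hphi⟩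
  | @tail b c h1 h2 ih =>
    intro y hy hpos hphi
    rw [← hphi] at h2
    obtain ⟨y1, hy1, hy1comp, hy1pos, hy1phi⟩ := step_realize_rev hy hpos h2
    obtain ⟨y2, hy2, hy2comp, hy2pos, hy2phi⟩ := ih y1 hy1 hy1pos hy1phi
    rw [← connectedComponentIn_eq hy1comp] at hy2comp
    exact ⟨y2, hy2, hy2comp, hy2pos, hy2phi⟩

/-- every connected component `Q` of the poset `P₀` is the image
under `φ` of some region `R` of `C₀`. -/
theorem component_is_image_of_region (n : ℕ) (G : SimpleGraph (Fin (n + 1)))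
    (hG : G.Connected)
    (Q : Set (Fin (n + 1) → Fin (n + 1) → Prop)) (hQ : IsComponent G Q) :
    ∃ R : Set (Fin (n + 1) → ℝ), IsRegion (C0set G) R ∧ phiDir G '' R = Q := by
  classical
  obtain ⟨d, hd, hQdef⟩ := hQ
  obtain ⟨x₀, hx₀, hx₀pos, hφx₀⟩ := exists_realizer (G := G) hd
  refine ⟨connectedComponentIn (C0set G) x₀, ⟨x₀, hx₀, rfl⟩, ?_⟩
  set R := connectedComponentIn (C0set G) x₀ with hR
  have hRsub : R ⊆ C0set G := connectedComponentIn_subset _ _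
  have loc : ∀ p : {p : Fin (n+1) → ℝ // p ∈ C0set G}, ∃ ε : ℝ, 0 < ε ∧
      ∀ w, w ∈ C0set G → (∀ j, |w j - p.1 j| < ε) →
        Relation.ReflTransGen (P0Step G) (phiDir G w) (phiDir G p.1) :=
    fun p => local_comparable p.2
  choose r hrpos hrchain using loc
  have hnear : ∀ (p : {p : Fin (n+1) → ℝ // p ∈ C0set G}) (q : Fin (n+1) → ℝ),
      q ∈ C0set G → dist q p.1 < r p →
      Relation.ReflTransGen (ComparableP0 G) (phiDir G q) (phiDir G p.1) ∧
      Relation.ReflTransGen (ComparableP0 G) (phiDir G p.1) (phiDir G q) := by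
    intro p q hq hdist
    have hcl : ∀ j, |q j - p.1 j| < r p := by
      intro j
      have h2 := dist_le_pi_dist q p.1 j
      rw [Real.dist_eq] at h2
      linarith
    have hstep := hrchain p q hq hcl
    have hcomp : ComparableP0 G (phiDir G q) (phiDir G p.1) :=
      ⟨memP0_phi hq, memP0_phi p.2, Or.inl hstep⟩
    exact ⟨Relation.ReflTransGen.single hcomp,
      Relation.ReflTransGen.single ⟨memP0_phi p.2, memP0_phi hq, Or.inr hstep⟩⟩
  have himp : ∀ y ∈ R, Relation.ReflTransGen (ComparableP0 G) d (phiDir G y) := by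
    by_contra hcon
    push_neg at hcon
    obtain ⟨y₀, hy₀R, hy₀n⟩ := hcon
    set O : Set (Fin (n+1) → ℝ) := ⋃ (p : {p : Fin (n+1) → ℝ // p ∈ C0set G ∧
        Relation.ReflTransGen (ComparableP0 G) d (phiDir G p)}),
      Metric.ball p.1 (r ⟨p.1, p.2.1⟩) with hO
    set O' : Set (Fin (n+1) → ℝ) := ⋃ (p : {p : Fin (n+1) → ℝ // p ∈ C0set G ∧
        ¬ Relation.ReflTransGen (ComparableP0 G) d (phiDir G p)}),
      Metric.ball p.1 (r ⟨p.1, p.2.1⟩) with hO'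
    have hOopen : IsOpen O := isOpen_iUnion fun _ => Metric.isOpen_ball
    have hO'open : IsOpen O' := isOpen_iUnion fun _ => Metric.isOpen_ball
    have hsub : R ⊆ O ∪ O' := by
      intro y hy
      have hyC := hRsub hy
      by_cases hc : Relation.ReflTransGen (ComparableP0 G) d (phiDir G y)
      · exact Or.inl (Set.mem_iUnion.mpr ⟨⟨y, hyC, hc⟩, Metric.mem_ball_self (hrpos ⟨y, hyC⟩)⟩)
      · exact Or.inr (Set.mem_iUnion.mpr ⟨⟨y, hyC, hc⟩, Metric.mem_ball_self (hrpos ⟨y, hyC⟩)⟩)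
    have hpre : IsPreconnected R := isPreconnected_connectedComponentIn
    have hne1 : (R ∩ O).Nonempty := by
      refine ⟨x₀, mem_connectedComponentIn hx₀, Set.mem_iUnion.mpr
        ⟨⟨x₀, hx₀, by rw [hφx₀]⟩, Metric.mem_ball_self (hrpos ⟨x₀, hx₀⟩)⟩⟩
    have hne2 : (R ∩ O').Nonempty :=
      ⟨y₀, hy₀R, Set.mem_iUnion.mpr ⟨⟨y₀, hRsub hy₀R, hy₀n⟩,
        Metric.mem_ball_self (hrpos ⟨y₀, hRsub hy₀R⟩)⟩⟩
    obtain ⟨y, hyR, hyO, hyO'⟩ := hpre O O' hOopen hO'open hsub hne1 hne2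
    have hyC := hRsub hyR
    obtain ⟨p, hp⟩ := Set.mem_iUnion.mp hyO
    obtain ⟨p', hp'⟩ := Set.mem_iUnion.mp hyO'
    have h1 := hnear ⟨p.1, p.2.1⟩ y hyC (Metric.mem_ball.mp hp)
    have h2 := hnear ⟨p'.1, p'.2.1⟩ y hyC (Metric.mem_ball.mp hp')
    exact p'.2.2 ((p.2.2.trans h1.2).trans h2.1)
  apply Set.Subset.antisymm
  · rintro _ ⟨y, hyR, rfl⟩
    rw [hQdef]
    exact himp y hyR
  · intro e he
    rw [hQdef] at he
    simp only [Set.mem_setOf_eq] at he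
    have key : ∃ y, y ∈ C0set G ∧ y ∈ R ∧
        (∀ j, j ≠ 0 → 0 < Int.fract (y j)) ∧ phiDir G y = e := by
      induction he with
      | refl => exact ⟨x₀, hx₀, mem_connectedComponentIn hx₀, hx₀pos, hφx₀⟩
      | @tail b c h1 h2 ih =>
        obtain ⟨y, hy, hyR, hypos, hyphi⟩ := ih
        rcases h2.2.2 with hle | hle
        · obtain ⟨y', hy', hy'comp, hy'pos, hy'phi⟩ := up_chain hle y hy hypos hyphi
          rw [← connectedComponentIn_eq hyR] at hy'comp
          exact ⟨y', hy', hy'comp, hy'pos, hy'phi⟩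
        · obtain ⟨y', hy', hy'comp, hy'pos, hy'phi⟩ := down_chain hle y hy hypos hyphi
          rw [← connectedComponentIn_eq hyR] at hy'comp
          exact ⟨y', hy', hy'comp, hy'pos, hy'phi⟩
    obtain ⟨y, _, hyR, _, hyphi⟩ := key
    exact ⟨y, hyR, hyphi⟩
end

section
/- Let G be a connected simple graph on the vertex set {0,1,…,n}, let Q be a connected component of the poset P₀ of acyclic orientations of G with 0 as a sink, and let R be a region of C₀ with φ(R) = Q. Then Q, with the order induced from P₀, is a lattice: any two elements of Q have a greatest lower bound and a least upper bound in Q. Moreover, the map φ|_R : R → Q is a lattice homomorphism: for all x, y ∈ R, φ(x ∧ y) = φ(x) ∧ φ(y) and φ(x ∨ y) = φ(x) ∨ φ(y), where on R the operations ∧ and ∨ are componentwise minimum and maximum. -/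
namespace PGA

variable {n : ℕ} {G : SimpleGraph (Fin (n + 1))}

lemma fract_ne {x : Fin (n+1) → ℝ} (hx : x ∈ C0set G) {a b} (h : G.Adj a b) :
    Int.fract (x a) ≠ Int.fract (x b) := by
  intro he
  apply hx.1 a b h (⌊x a⌋ - ⌊x b⌋)
  have ha := Int.self_sub_fract (x a)
  have hb := Int.self_sub_fract (x b)
  push_cast
  linarith

lemma floor_sub (a b : ℝ) :
    ⌊a - b⌋ = ⌊a⌋ - ⌊b⌋ - (if Int.fract a < Int.fract b then 1 else 0) := by
  have h : a - b = ((⌊a⌋ - ⌊b⌋ : ℤ) : ℝ) + (Int.fract a - Int.fract b) := by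
    have ha := Int.self_sub_fract a; have hb := Int.self_sub_fract b
    push_cast; linarith
  rw [h, Int.floor_intCast_add]
  have ha := Int.fract_nonneg a; have ha1 := Int.fract_lt_one a
  have hb := Int.fract_nonneg b; have hb1 := Int.fract_lt_one b
  split_ifs with hc
  · have h1 : ⌊Int.fract a - Int.fract b⌋ = -1 := by
      rw [Int.floor_eq_iff] <;> push_cast <;> constructor <;> linarith
    omega
  · have h1 : ⌊Int.fract a - Int.fract b⌋ = 0 := by
      rw [Int.floor_eq_iff] <;> push_cast <;> constructor <;> linarith
    omega

/-- the "slab" containing the base point `x₀`. -/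
def InReg {n : ℕ} (G : SimpleGraph (Fin (n + 1))) (x₀ x : Fin (n + 1) → ℝ) : Prop :=
  x 0 = 0 ∧ ∀ a b, G.Adj a b →
    x a - x b ∈ Set.Ioo ((⌊x₀ a - x₀ b⌋ : ℝ)) ((⌊x₀ a - x₀ b⌋ : ℝ) + 1)

lemma inReg_mem_C0 {x₀ x : Fin (n+1) → ℝ} (hx : InReg G x₀ x) : x ∈ C0set G := by
  refine ⟨fun i j hij k hk => ?_, hx.1⟩
  obtain ⟨h1, h2⟩ := hx.2 i j hij
  have : x i - x j = (k : ℝ) := by linarith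
  rw [this] at h1 h2
  have l1 : ⌊x₀ i - x₀ j⌋ < k := by exact_mod_cast h1
  have l2 : (k:ℝ) < (⌊x₀ i - x₀ j⌋ + 1 : ℤ) := by push_cast; linarith
  have l2' : k < ⌊x₀ i - x₀ j⌋ + 1 := by exact_mod_cast l2
  omega

lemma inReg_self {x₀ : Fin (n+1) → ℝ} (hx₀ : x₀ ∈ C0set G) : InReg G x₀ x₀ := by
  refine ⟨hx₀.2, fun a b hab => ?_⟩
  constructor
  · rcases lt_or_eq_of_le (Int.floor_le (x₀ a - x₀ b)) with h | h
    · exact h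
    · exact absurd h.symm (by intro hh; exact hx₀.1 a b hab ⌊x₀ a - x₀ b⌋ (by linarith))
  · exact Int.lt_floor_add_one _

lemma inReg_floor_edge {x₀ x : Fin (n+1) → ℝ} (hx : InReg G x₀ x) {a b} (hab : G.Adj a b) :
    ⌊x a - x b⌋ = ⌊x₀ a - x₀ b⌋ := by
  obtain ⟨h1, h2⟩ := hx.2 a b hab
  rw [Int.floor_eq_iff]
  exact ⟨le_of_lt h1, by push_cast; linarith⟩

/-- key identity on edges -/
lemma floor_diff_eq {x₀ x : Fin (n+1) → ℝ} (hx : InReg G x₀ x) {a b} (hab : G.Adj a b) :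
    ⌊x a⌋ - ⌊x b⌋ = ⌊x₀ a - x₀ b⌋ +
      (if Int.fract (x a) < Int.fract (x b) then 1 else 0) := by
  have h := floor_sub (x a) (x b)
  rw [inReg_floor_edge hx hab] at h
  omega

lemma reg_convex (x₀ : Fin (n+1) → ℝ) : Convex ℝ {x | InReg G x₀ x} := by
  intro x hx y hy s t hs ht hst
  constructor
  · have : (s • x + t • y) 0 = s * x 0 + t * y 0 := by simp [smul_eq_mul]
    rw [this, hx.1, hy.1]; ring
  · intro a b hab
    have h := (convex_Ioo ((⌊x₀ a - x₀ b⌋ : ℝ)) ((⌊x₀ a - x₀ b⌋ : ℝ) + 1))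
      (hx.2 a b hab) (hy.2 a b hab) hs ht hst
    have e : s • (x a - x b) + t • (y a - y b)
        = (s • x + t • y) a - (s • x + t • y) b := by
      simp [smul_eq_mul]; ring
    rwa [e] at h

lemma region_eq {x₀ : Fin (n+1) → ℝ} (hx₀ : x₀ ∈ C0set G) :
    connectedComponentIn (C0set G) x₀ = {x | InReg G x₀ x} := by
  apply Set.Subset.antisymm
  · intro x hx
    have hxC : x ∈ C0set G := connectedComponentIn_subset _ _ hx
    refine ⟨hxC.2, fun a b hab => ?_⟩
    have hcont : ContinuousOn (fun z : Fin (n+1) → ℝ => z a - z b)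
        (connectedComponentIn (C0set G) x₀) :=
      ((continuous_apply a).sub (continuous_apply b)).continuousOn
    have hpc : IsPreconnected (connectedComponentIn (C0set G) x₀) :=
      isPreconnected_connectedComponentIn
    have hx₀mem : x₀ ∈ connectedComponentIn (C0set G) x₀ :=
      mem_connectedComponentIn hx₀
    have hnoint : ∀ z ∈ connectedComponentIn (C0set G) x₀, ∀ k : ℤ, z a - z b ≠ (k:ℝ) := by
      intro z hz k hk
      exact (connectedComponentIn_subset _ _ hz).1 a b hab k (by linarith)
    have hfloor : ⌊x a - x b⌋ = ⌊x₀ a - x₀ b⌋ := by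
      by_contra hne
      rcases lt_or_gt_of_ne hne with hlt | hgt
      · obtain ⟨z, hz, hze⟩ := hpc.intermediate_value₂ hx hx₀mem hcont
          (continuousOn_const (c := ((⌊x₀ a - x₀ b⌋ : ℤ) : ℝ)))
          (by
            have h2 : ((⌊x a - x b⌋ : ℤ) : ℝ) + 1 ≤ (⌊x₀ a - x₀ b⌋ : ℝ) := by
              exact_mod_cast Int.add_one_le_iff.mpr hlt
            linarith [Int.lt_floor_add_one (x a - x b)])
          (Int.floor_le _)
        exact hnoint z hz _ hze
      · obtain ⟨z, hz, hze⟩ := hpc.intermediate_value₂ hx₀mem hx hcont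
          (continuousOn_const (c := ((⌊x a - x b⌋ : ℤ) : ℝ)))
          (by
            have h2 : ((⌊x₀ a - x₀ b⌋ : ℤ) : ℝ) + 1 ≤ (⌊x a - x b⌋ : ℝ) := by
              exact_mod_cast Int.add_one_le_iff.mpr hgt
            linarith [Int.lt_floor_add_one (x₀ a - x₀ b)])
          (Int.floor_le _)
        exact hnoint z hz _ hze
    constructor
    · rcases lt_or_eq_of_le (Int.floor_le (x a - x b)) with h | h
      · rw [hfloor] at h; exact h
      · exact absurd h.symm (fun hh => hxC.1 a b hab ⌊x a - x b⌋ (by linarith))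
    · have := Int.lt_floor_add_one (x a - x b); rw [hfloor] at this
      linarith
  · intro x hx
    exact (reg_convex x₀).isPreconnected.subset_connectedComponentIn
      (inReg_self hx₀) (fun z hz => inReg_mem_C0 hz) hx

lemma inReg_inf {x₀ x y : Fin (n+1) → ℝ} (hx : InReg G x₀ x) (hy : InReg G x₀ y) :
    InReg G x₀ (x ⊓ y) := by
  refine ⟨?_, fun a b hab => ?_⟩
  · have : (x ⊓ y) 0 = min (x 0) (y 0) := rfl
    rw [this, hx.1, hy.1, min_self]
  · obtain ⟨hx1, hx2⟩ := hx.2 a b hab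
    obtain ⟨hy1, hy2⟩ := hy.2 a b hab
    have ea : (x ⊓ y) a = min (x a) (y a) := rfl
    have eb : (x ⊓ y) b = min (x b) (y b) := rfl
    rw [ea, eb]
    constructor
    · rcases min_cases (x a) (y a) with ⟨h, _⟩ | ⟨h, _⟩ <;> rw [h]
      · have := min_le_left (x b) (y b); linarith
      · have := min_le_right (x b) (y b); linarith
    · rcases min_cases (x b) (y b) with ⟨h, _⟩ | ⟨h, _⟩ <;> rw [h]
      · have := min_le_left (x a) (y a); linarith
      · have := min_le_right (x a) (y a); linarith

lemma inReg_sup {x₀ x y : Fin (n+1) → ℝ} (hx : InReg G x₀ x) (hy : InReg G x₀ y) :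
    InReg G x₀ (x ⊔ y) := by
  refine ⟨?_, fun a b hab => ?_⟩
  · have : (x ⊔ y) 0 = max (x 0) (y 0) := rfl
    rw [this, hx.1, hy.1, max_self]
  · obtain ⟨hx1, hx2⟩ := hx.2 a b hab
    obtain ⟨hy1, hy2⟩ := hy.2 a b hab
    have ea : (x ⊔ y) a = max (x a) (y a) := rfl
    have eb : (x ⊔ y) b = max (x b) (y b) := rfl
    rw [ea, eb]
    constructor
    · rcases max_cases (x b) (y b) with ⟨h, _⟩ | ⟨h, _⟩ <;> rw [h]
      · have := le_max_left (x a) (y a); linarith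
      · have := le_max_right (x a) (y a); linarith
    · rcases max_cases (x a) (y a) with ⟨h, _⟩ | ⟨h, _⟩ <;> rw [h]
      · have := le_max_left (x b) (y b); linarith
      · have := le_max_right (x b) (y b); linarith

lemma transGen_fract {x : Fin (n+1) → ℝ} {a b : Fin (n+1)}
    (h : Relation.TransGen (phiDir G x) a b) : Int.fract (x b) < Int.fract (x a) := by
  induction h with
  | single h => exact h.2
  | tail _ h ih => exact h.2.trans ih

lemma fract_zero_of_C0 {x : Fin (n+1) → ℝ} (hx : x ∈ C0set G) :
    Int.fract (x 0) = 0 := by rw [hx.2]; exact Int.fract_zero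

lemma fract_pos_adj0 {x : Fin (n+1) → ℝ} (hx : x ∈ C0set G) {j} (h : G.Adj j 0) :
    0 < Int.fract (x j) := by
  have h1 : Int.fract (x j) ≠ Int.fract (x 0) := fract_ne hx h
  rw [fract_zero_of_C0 hx] at h1
  exact lt_of_le_of_ne (Int.fract_nonneg _) (Ne.symm h1)

lemma memP0_phi {x : Fin (n+1) → ℝ} (hx : x ∈ C0set G) : MemP0 G (phiDir G x) := by
  refine ⟨⟨⟨fun i j h => h.1, fun i j hadj => ?_⟩, fun v h => lt_irrefl _ (transGen_fract h)⟩,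
    fun j hj => ⟨hj.symm, by rw [fract_zero_of_C0 hx]; exact fract_pos_adj0 hx hj.symm⟩⟩
  constructor
  · rintro ⟨_, h2⟩ ⟨_, h3⟩; linarith
  · intro hnd
    refine ⟨hadj, ?_⟩
    have h1 : ¬ Int.fract (x i) < Int.fract (x j) := fun hh => hnd ⟨hadj.symm, hh⟩
    exact lt_of_le_of_ne (not_lt.mp h1) (fract_ne hx hadj).symm

lemma nu_eq_of_phi_eq {x₀ x y : Fin (n+1) → ℝ} (hG : G.Connected)
    (hx : InReg G x₀ x) (hy : InReg G x₀ y)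
    (h : phiDir G x = phiDir G y) : ∀ v, ⌊x v⌋ = ⌊y v⌋ := by
  have key : ∀ u v : Fin (n+1), G.Walk u v → ⌊x u⌋ - ⌊y u⌋ = ⌊x v⌋ - ⌊y v⌋ := by
    intro u v w
    induction w with
    | nil => rfl
    | @cons u m v hadj p ih =>
      have hx' := floor_diff_eq hx hadj
      have hy' := floor_diff_eq hy hadj
      have hiff : (Int.fract (x u) < Int.fract (x m)) ↔
          (Int.fract (y u) < Int.fract (y m)) := by
        constructor
        · intro hh
          have : phiDir G y m u := h ▸ (⟨hadj.symm, hh⟩ : phiDir G x m u)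
          exact this.2
        · intro hh
          have : phiDir G x m u := h.symm ▸ (⟨hadj.symm, hh⟩ : phiDir G y m u)
          exact this.2
      rw [if_congr hiff rfl rfl] at hx'
      have heq : ⌊x u⌋ - ⌊x m⌋ = ⌊y u⌋ - ⌊y m⌋ := by rw [hx', hy']
      omega
  intro v
  obtain ⟨w⟩ := hG 0 v
  have h0 : ⌊x 0⌋ = 0 := by rw [hx.1]; exact Int.floor_zero
  have h0' : ⌊y 0⌋ = 0 := by rw [hy.1]; exact Int.floor_zero
  have := key 0 v w
  omega

lemma phi_eq_of_nu_eq {x₀ x y : Fin (n+1) → ℝ} (hx : InReg G x₀ x) (hy : InReg G x₀ y)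
    (h : ∀ v, ⌊x v⌋ = ⌊y v⌋) : phiDir G x = phiDir G y := by
  funext a b
  apply propext
  by_cases hadj : G.Adj a b
  · have hx' := floor_diff_eq hx hadj
    have hy' := floor_diff_eq hy hadj
    have ha := h a; have hb := h b
    have hiff : (Int.fract (x a) < Int.fract (x b)) ↔
        (Int.fract (y a) < Int.fract (y b)) := by
      constructor
      · intro hh; by_contra hc
        rw [if_pos hh] at hx'; rw [if_neg hc] at hy'; omega
      · intro hh; by_contra hc
        rw [if_neg hc] at hx'; rw [if_pos hh] at hy'; omega
    have hnx := fract_ne (inReg_mem_C0 hx) hadj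
    have hny := fract_ne (inReg_mem_C0 hy) hadj
    constructor
    · rintro ⟨_, hlt⟩
      refine ⟨hadj, ?_⟩
      by_contra hc
      exact absurd (hiff.mpr (lt_of_le_of_ne (not_lt.mp hc) hny)) (not_lt.mpr (le_of_lt hlt))
    · rintro ⟨_, hlt⟩
      refine ⟨hadj, ?_⟩
      by_contra hc
      exact absurd (hiff.mp (lt_of_le_of_ne (not_lt.mp hc) hnx)) (not_lt.mpr (le_of_lt hlt))
  · constructor
    · rintro ⟨h1, _⟩; exact absurd h1 hadj
    · rintro ⟨h1, _⟩; exact absurd h1 hadj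



lemma fire_construct {x₀ x : Fin (n+1) → ℝ} (hx : InReg G x₀ x)
    {i : Fin (n+1)} (hi0 : i ≠ 0) (hiadj : ¬ G.Adj i 0)
    (hsrc : IsSource G (phiDir G x) i) :
    ∃ x' : Fin (n+1) → ℝ, InReg G x₀ x' ∧
      (∀ v, ⌊x' v⌋ = ⌊x v⌋ + (if v = i then 1 else 0)) ∧
      (∀ a b, phiDir G x' a b ↔
        (((a = i ∨ b = i) ∧ phiDir G x b a) ∨ ((a ≠ i ∧ b ≠ i) ∧ phiDir G x a b))) := by
  classical
  have hxC := inReg_mem_C0 hx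
  have hsf : ∀ j, G.Adj i j → Int.fract (x j) < Int.fract (x i) :=
    fun j h => (hsrc j h).2
  set f : Fin (n+1) → ℝ := fun v => if v = 0 then 0 else if v = i then 1/4
      else Int.fract (x v)/2 + 1/2 with hf
  have hf0 : ∀ v, 0 ≤ f v := by
    intro v; simp only [hf]; split_ifs
    · exact le_refl _
    · norm_num
    · linarith [Int.fract_nonneg (x v)]
  have hf1 : ∀ v, f v < 1 := by
    intro v; simp only [hf]; split_ifs
    · norm_num
    · norm_num
    · linarith [Int.fract_lt_one (x v)]
  have hfmid : ∀ v, v ≠ 0 → v ≠ i → f v = Int.fract (x v)/2 + 1/2 := by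
    intro v h0 h1; simp [hf, h0, h1]
  have hfi : f i = 1/4 := by simp [hf, hi0]
  have hf0' : f 0 = 0 := by simp [hf]
  set x' : Fin (n+1) → ℝ := fun v => ((⌊x v⌋ + (if v = i then 1 else 0) : ℤ) : ℝ) + f v
    with hx'def
  have hfract : ∀ v, Int.fract (x' v) = f v := by
    intro v
    show Int.fract (((⌊x v⌋ + (if v = i then 1 else 0) : ℤ) : ℝ) + f v) = f v
    rw [Int.fract_intCast_add, Int.fract_eq_self.mpr ⟨hf0 v, hf1 v⟩]
  have hfloor : ∀ v, ⌊x' v⌋ = ⌊x v⌋ + (if v = i then 1 else 0) := by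
    intro v
    show ⌊((⌊x v⌋ + (if v = i then 1 else 0) : ℤ) : ℝ) + f v⌋ = _
    rw [Int.floor_intCast_add]
    have : ⌊f v⌋ = 0 := Int.floor_eq_zero_iff.mpr ⟨hf0 v, hf1 v⟩
    omega
  -- comparison of f with fract x, away from i
  have hcmp : ∀ a b, G.Adj a b → a ≠ i → b ≠ i →
      (f a < f b ↔ Int.fract (x a) < Int.fract (x b)) := by
    intro a b hab ha hb
    have hne := fract_ne hxC hab
    by_cases ha0 : a = 0
    · subst ha0
      have hb0 : b ≠ 0 := fun h => (G.loopless.irrefl 0) (h ▸ hab)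
      rw [hf0', hfmid b hb0 hb, fract_zero_of_C0 hxC]
      have h2 : 0 < Int.fract (x b) := fract_pos_adj0 hxC hab.symm
      constructor
      · intro _; exact h2
      · intro _; linarith
    · by_cases hb0 : b = 0
      · subst hb0
        rw [hf0', hfmid a ha0 ha, fract_zero_of_C0 hxC]
        have h2 : 0 < Int.fract (x a) := fract_pos_adj0 hxC hab
        constructor
        · intro h; linarith [Int.fract_nonneg (x a)]
        · intro h; linarith
      · rw [hfmid a ha0 ha, hfmid b hb0 hb]
        constructor <;> intro <;> linarith
  have hcne : ∀ a b, G.Adj a b → a ≠ i → b ≠ i → f a ≠ f b := by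
    intro a b hab ha hb heq
    have hne := fract_ne hxC hab
    by_cases ha0 : a = 0
    · subst ha0
      have hb0 : b ≠ 0 := fun h => (G.loopless.irrefl 0) (h ▸ hab)
      rw [hf0', hfmid b hb0 hb] at heq
      have h2 : 0 < Int.fract (x b) := fract_pos_adj0 hxC hab.symm
      linarith
    · by_cases hb0 : b = 0
      · subst hb0
        rw [hf0', hfmid a ha0 ha] at heq
        have h2 : 0 < Int.fract (x a) := fract_pos_adj0 hxC hab
        linarith
      · rw [hfmid a ha0 ha, hfmid b hb0 hb] at heq
        apply hne; linarith
  refine ⟨x', ?_, hfloor, ?_⟩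
  · -- region membership
    constructor
    · show ((⌊x 0⌋ + (if (0:Fin (n+1)) = i then 1 else 0) : ℤ) : ℝ) + f 0 = 0
      have h0 : ⌊x 0⌋ = 0 := by rw [hx.1]; exact Int.floor_zero
      rw [h0, if_neg (Ne.symm hi0), hf0']
      norm_num
    · intro a b hab
      have hK := floor_diff_eq hx hab
      have hxa' : x' a = ((⌊x a⌋ + (if a = i then 1 else 0) : ℤ) : ℝ) + f a := rfl
      have hxb' : x' b = ((⌊x b⌋ + (if b = i then 1 else 0) : ℤ) : ℝ) + f b := rfl
      rw [Set.mem_Ioo, hxa', hxb']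
      have hb0 := hf0 b; have hb1 := hf1 b; have ha0 := hf0 a; have ha1 := hf1 a
      -- reduce to the two patterns
      have main : ((⌊x a⌋ + (if a = i then 1 else 0)) - (⌊x b⌋ + (if b = i then 1 else 0))
            = ⌊x₀ a - x₀ b⌋ ∧ f b < f a) ∨
          ((⌊x a⌋ + (if a = i then 1 else 0)) - (⌊x b⌋ + (if b = i then 1 else 0))
            = ⌊x₀ a - x₀ b⌋ + 1 ∧ f a < f b) := by
        by_cases hai : a = i
        · subst hai
          have hbi : b ≠ a := (hab.ne).symm
          have hbz : b ≠ 0 := fun h => hiadj (h ▸ hab)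
          right
          have hc : ¬ Int.fract (x a) < Int.fract (x b) := not_lt.mpr (le_of_lt (hsf b hab))
          rw [if_neg hc] at hK
          constructor
          · rw [if_pos rfl, if_neg hbi]; omega
          · rw [hfi, hfmid b hbz hbi]; linarith [Int.fract_nonneg (x b)]
        · by_cases hbi : b = i
          · subst hbi
            have haz : a ≠ 0 := fun h => hiadj (h ▸ hab.symm)
            left
            have hc : Int.fract (x a) < Int.fract (x b) := hsf a hab.symm
            rw [if_pos hc] at hK
            constructor
            · rw [if_pos rfl, if_neg hai]; omega
            · rw [hfi, hfmid a haz hai]; linarith [Int.fract_nonneg (x a)]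
          · rw [if_neg hai, if_neg hbi]
            have hne := fract_ne hxC hab
            by_cases hc : Int.fract (x a) < Int.fract (x b)
            · right
              rw [if_pos hc] at hK
              exact ⟨by omega, (hcmp a b hab hai hbi).mpr hc⟩
            · left
              rw [if_neg hc] at hK
              refine ⟨by omega, ?_⟩
              have : Int.fract (x b) < Int.fract (x a) :=
                lt_of_le_of_ne (not_lt.mp hc) (Ne.symm hne)
              have hle : f b ≤ f a := not_lt.mp (fun hh =>
                absurd ((hcmp a b hab hai hbi).mp hh) (not_lt.mpr (le_of_lt this)))
              exact lt_of_le_of_ne hle (hcne a b hab hai hbi).symm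
          
      rcases main with ⟨hm, hlt⟩ | ⟨hm, hlt⟩
      · constructor
        · have : ((⌊x a⌋ + (if a = i then 1 else 0) : ℤ) : ℝ)
              - ((⌊x b⌋ + (if b = i then 1 else 0) : ℤ) : ℝ) = (⌊x₀ a - x₀ b⌋ : ℝ) := by
            exact_mod_cast congrArg (Int.cast : ℤ → ℝ) hm
          linarith
        · have : ((⌊x a⌋ + (if a = i then 1 else 0) : ℤ) : ℝ)
              - ((⌊x b⌋ + (if b = i then 1 else 0) : ℤ) : ℝ) = (⌊x₀ a - x₀ b⌋ : ℝ) := by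
            exact_mod_cast congrArg (Int.cast : ℤ → ℝ) hm
          linarith
      · constructor
        · have : ((⌊x a⌋ + (if a = i then 1 else 0) : ℤ) : ℝ)
              - ((⌊x b⌋ + (if b = i then 1 else 0) : ℤ) : ℝ) = (⌊x₀ a - x₀ b⌋ : ℝ) + 1 := by
            have := congrArg (Int.cast : ℤ → ℝ) hm; push_cast at this ⊢; linarith
          linarith
        · have : ((⌊x a⌋ + (if a = i then 1 else 0) : ℤ) : ℝ)
              - ((⌊x b⌋ + (if b = i then 1 else 0) : ℤ) : ℝ) = (⌊x₀ a - x₀ b⌋ : ℝ) + 1 := by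
            have := congrArg (Int.cast : ℤ → ℝ) hm; push_cast at this ⊢; linarith
          linarith
  · -- the fired orientation
    intro a b
    by_cases hab : G.Adj a b
    · have hLHS : phiDir G x' a b ↔ f b < f a := by
        unfold phiDir
        rw [hfract a, hfract b]
        simp [hab]
      rw [hLHS]
      by_cases hai : a = i
      · subst hai
        have hbi : b ≠ a := (hab.ne).symm
        have hbz : b ≠ 0 := fun h => hiadj (h ▸ hab)
        have hnlt : ¬ (f b < f a) := by
          rw [hfi, hfmid b hbz hbi]; push_neg; linarith [Int.fract_nonneg (x b)]
        constructor
        · intro h; exact absurd h hnlt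
        · rintro (⟨_, _, hlt⟩ | ⟨⟨hne, _⟩, _⟩)
          · exact absurd hlt (not_lt.mpr (le_of_lt (hsf b hab)))
          · exact absurd rfl hne
      · by_cases hbi : b = i
        · subst hbi
          have haz : a ≠ 0 := fun h => hiadj (h ▸ hab.symm)
          have hlt : f b < f a := by
            rw [hfi, hfmid a haz hai]; linarith [Int.fract_nonneg (x a)]
          constructor
          · intro _; exact Or.inl ⟨Or.inr rfl, hab.symm, hsf a hab.symm⟩
          · intro _; exact hlt
        · constructor
          · intro h
            exact Or.inr ⟨⟨hai, hbi⟩, hab, (hcmp b a hab.symm hbi hai).mp h⟩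
          · rintro (⟨hor, _⟩ | ⟨_, _, hlt⟩)
            · rcases hor with h | h
              · exact absurd h hai
              · exact absurd h hbi
            · exact (hcmp b a hab.symm hbi hai).mpr hlt
    · constructor
      · rintro ⟨h, _⟩; exact absurd h hab
      · rintro (⟨_, h, _⟩ | ⟨_, h, _⟩)
        · exact absurd h.symm hab
        · exact absurd h hab


lemma phi_memP0_reg {x₀ x : Fin (n+1) → ℝ} (hx : InReg G x₀ x) :
    MemP0 G (phiDir G x) := memP0_phi (inReg_mem_C0 hx)

/-- if `P0le (φ x) d`, then `d = φ z` for some `z` in the region with larger `ν`. -/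
lemma le_nu {x₀ x : Fin (n+1) → ℝ} (hx : InReg G x₀ x)
    {d : Fin (n+1) → Fin (n+1) → Prop} (h : P0le G (phiDir G x) d) :
    ∃ z, InReg G x₀ z ∧ phiDir G z = d ∧ ∀ v, ⌊x v⌋ ≤ ⌊z v⌋ := by
  induction h with
  | refl => exact ⟨x, hx, rfl, fun v => le_refl _⟩
  | @tail b c hab hstep ih =>
    obtain ⟨z, hz, hphiz, hle⟩ := ih
    obtain ⟨hmem1, hmem2, i, hi0, hfire⟩ := hstep
    subst hphiz
    obtain ⟨hsrc, hform⟩ := hfire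
    have hzC := inReg_mem_C0 hz
    have hiadj : ¬ G.Adj i 0 := by
      intro hadj
      have hphii0 : phiDir G z i 0 := by
        refine ⟨hadj, ?_⟩
        rw [fract_zero_of_C0 hzC]
        exact fract_pos_adj0 hzC hadj
      have h0i : c 0 i := (hform 0 i).mpr (Or.inl ⟨Or.inr rfl, hphii0⟩)
      have hi0' : c i 0 := hmem2.2 i hadj.symm
      exact ((hmem2.1.1.2 0 i hadj.symm).mp h0i) hi0'
    obtain ⟨z', hz', hfl, hphi⟩ := fire_construct hz hi0 hiadj hsrc
    have hc : phiDir G z' = c := by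
      funext a b
      exact propext ((hphi a b).trans (hform a b).symm)
    refine ⟨z', hz', hc, fun v => ?_⟩
    have h1 := hfl v
    have h2 := hle v
    by_cases hvi : v = i
    · rw [if_pos hvi] at h1; omega
    · rw [if_neg hvi] at h1; omega

/-- conversely, `ν x ≤ ν y` implies `P0le (φ x) (φ y)`. -/
lemma nu_le {x₀ y : Fin (n+1) → ℝ} (hG : G.Connected) (hy : InReg G x₀ y) :
    ∀ (N : ℕ) (x : Fin (n+1) → ℝ), InReg G x₀ x → (∀ v, ⌊x v⌋ ≤ ⌊y v⌋) →
      (∑ v, (⌊y v⌋ - ⌊x v⌋).toNat = N) → P0le G (phiDir G x) (phiDir G y) := by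
  intro N
  induction N with
  | zero =>
    intro x hx hle hsum
    have heq : ∀ v, ⌊x v⌋ = ⌊y v⌋ := by
      intro v
      have h1 := Finset.sum_eq_zero_iff.mp hsum v (Finset.mem_univ v)
      have h2 := hle v
      omega
    rw [phi_eq_of_nu_eq hx hy heq]
    exact Relation.ReflTransGen.refl
  | succ N ih =>
    intro x hx hle hsum
    classical
    have hne : ∃ v, ⌊x v⌋ < ⌊y v⌋ := by
      by_contra hc
      push_neg at hc
      have hz : ∀ v, (⌊y v⌋ - ⌊x v⌋).toNat = 0 := fun v => by have := hc v; omega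
      rw [Finset.sum_congr rfl (fun v _ => hz v)] at hsum
      simp at hsum
    set A : Finset (Fin (n+1)) := Finset.univ.filter (fun v => ⌊x v⌋ < ⌊y v⌋) with hA
    have hAne : A.Nonempty := by
      obtain ⟨v, hv⟩ := hne; exact ⟨v, by simp [hA, hv]⟩
    obtain ⟨i, hiA, hmax⟩ := Finset.exists_max_image A (fun v => Int.fract (x v)) hAne
    have hiA' : ⌊x i⌋ < ⌊y i⌋ := by simpa [hA] using hiA
    have hxC := inReg_mem_C0 hx
    have hyC := inReg_mem_C0 hy
    have hi0 : i ≠ 0 := by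
      intro h; subst h
      have h1 : ⌊x 0⌋ = 0 := by rw [hx.1]; exact Int.floor_zero
      have h2 : ⌊y 0⌋ = 0 := by rw [hy.1]; exact Int.floor_zero
      omega
    have hiadj : ¬ G.Adj i 0 := by
      intro hadj
      have hKx := floor_diff_eq hx hadj
      have hKy := floor_diff_eq hy hadj
      have hcx : ¬ Int.fract (x i) < Int.fract (x 0) := by
        rw [fract_zero_of_C0 hxC]; exact not_lt.mpr (Int.fract_nonneg _)
      have hcy : ¬ Int.fract (y i) < Int.fract (y 0) := by
        rw [fract_zero_of_C0 hyC]; exact not_lt.mpr (Int.fract_nonneg _)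
      rw [if_neg hcx] at hKx; rw [if_neg hcy] at hKy
      have h1 : ⌊x 0⌋ = 0 := by rw [hx.1]; exact Int.floor_zero
      have h2 : ⌊y 0⌋ = 0 := by rw [hy.1]; exact Int.floor_zero
      omega
    have hsrc : IsSource G (phiDir G x) i := by
      intro j hadj
      refine ⟨hadj, ?_⟩
      by_cases hjA : ⌊x j⌋ < ⌊y j⌋
      · have hj : Int.fract (x j) ≤ Int.fract (x i) := hmax j (by simp [hA, hjA])
        exact lt_of_le_of_ne hj (fract_ne hxC hadj.symm)
      · have hj : ⌊x j⌋ = ⌊y j⌋ := le_antisymm (hle j) (not_lt.mp hjA)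
        by_contra hc
        have hlt : Int.fract (x i) < Int.fract (x j) :=
          lt_of_le_of_ne (not_lt.mp hc) (fract_ne hxC hadj)
        have hKx := floor_diff_eq hx hadj
        have hKy := floor_diff_eq hy hadj
        rw [if_pos hlt] at hKx
        have hy1 : ⌊y i⌋ - ⌊y j⌋ ≤ ⌊x₀ i - x₀ j⌋ + 1 := by
          rw [hKy]; split_ifs <;> omega
        omega
    obtain ⟨x', hx', hfl, hphi⟩ := fire_construct hx hi0 hiadj hsrc
    have hle' : ∀ v, ⌊x' v⌋ ≤ ⌊y v⌋ := by
      intro v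
      have h1 := hfl v
      by_cases hvi : v = i
      · rw [if_pos hvi] at h1; subst hvi; omega
      · rw [if_neg hvi] at h1; have := hle v; omega
    have hsum' : ∑ v, (⌊y v⌋ - ⌊x' v⌋).toNat = N := by
      have key : ∀ v, (⌊y v⌋ - ⌊x v⌋).toNat
          = (⌊y v⌋ - ⌊x' v⌋).toNat + (if v = i then 1 else 0) := by
        intro v
        have h1 := hfl v
        by_cases hvi : v = i
        · rw [if_pos hvi] at h1 ⊢; subst hvi; omega
        · rw [if_neg hvi] at h1 ⊢; omega
      rw [Finset.sum_congr rfl (fun v _ => key v), Finset.sum_add_distrib] at hsum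
      have hone : ∑ v : Fin (n+1), (if v = i then 1 else 0) = 1 := by simp
      omega
    have hstep : P0Step G (phiDir G x) (phiDir G x') :=
      ⟨phi_memP0_reg hx, phi_memP0_reg hx', i, hi0, hsrc, hphi⟩
    exact Relation.ReflTransGen.head hstep (ih x' hx' hle' hsum')

end PGA

/-- a connected component `Q` of `P₀` is a lattice, and for a region `R`
of `C₀` with `φ(R) = Q` the map `φ|_R` is a lattice homomorphism:
`φ(x ⊓ y)` is the meet of `φ(x)` and `φ(y)` in `Q`, and dually for joins. -/
theorem component_is_lattice_and_phi_lattice_hom (n : ℕ)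
    (G : SimpleGraph (Fin (n + 1))) (hG : G.Connected)
    (Q : Set (Fin (n + 1) → Fin (n + 1) → Prop)) (hQ : IsComponent G Q)
    (R : Set (Fin (n + 1) → ℝ)) (hR : IsRegion (C0set G) R)
    (hRQ : phiDir G '' R = Q) :
    (∀ a ∈ Q, ∀ b ∈ Q, (∃ m, IsMeetIn G Q a b m) ∧ (∃ j, IsJoinIn G Q a b j)) ∧
    (∀ x ∈ R, ∀ y ∈ R,
      IsMeetIn G Q (phiDir G x) (phiDir G y) (phiDir G (x ⊓ y)) ∧
      IsJoinIn G Q (phiDir G x) (phiDir G y) (phiDir G (x ⊔ y))) := by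
  classical
  obtain ⟨x₀, hx₀, hReq⟩ := hR
  have hmemR : ∀ x, x ∈ R ↔ PGA.InReg G x₀ x := by
    intro x
    rw [hReq, PGA.region_eq hx₀]
    rfl
  have hP0le : ∀ x y : Fin (n+1) → ℝ, PGA.InReg G x₀ x → PGA.InReg G x₀ y →
      (∀ v, ⌊x v⌋ ≤ ⌊y v⌋) → P0le G (phiDir G x) (phiDir G y) :=
    fun x y hx hy hle => PGA.nu_le hG hy _ x hx hle rfl
  have hP0le' : ∀ x y : Fin (n+1) → ℝ, PGA.InReg G x₀ x → PGA.InReg G x₀ y →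
      P0le G (phiDir G x) (phiDir G y) → ∀ v, ⌊x v⌋ ≤ ⌊y v⌋ := by
    intro x y hx hy h v
    obtain ⟨z, hz, hphiz, hle⟩ := PGA.le_nu hx h
    have h2 := PGA.nu_eq_of_phi_eq hG hz hy hphiz v
    have h3 := hle v
    omega
  have part2 : ∀ x ∈ R, ∀ y ∈ R,
      IsMeetIn G Q (phiDir G x) (phiDir G y) (phiDir G (x ⊓ y)) ∧
      IsJoinIn G Q (phiDir G x) (phiDir G y) (phiDir G (x ⊔ y)) := by
    intro x hx y hy
    rw [hmemR] at hx hy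
    have hxy_inf := PGA.inReg_inf hx hy
    have hxy_sup := PGA.inReg_sup hx hy
    have hinf : ∀ v, ⌊(x ⊓ y) v⌋ = ⌊x v⌋ ⊓ ⌊y v⌋ := by
      intro v
      have : (x ⊓ y) v = x v ⊓ y v := rfl
      rw [this]
      exact Int.floor_mono.map_min
    have hsup : ∀ v, ⌊(x ⊔ y) v⌋ = ⌊x v⌋ ⊔ ⌊y v⌋ := by
      intro v
      have : (x ⊔ y) v = x v ⊔ y v := rfl
      rw [this]
      exact Int.floor_mono.map_max
    constructor
    · refine ⟨?_, ?_, ?_, ?_⟩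
      · rw [← hRQ]; exact ⟨x ⊓ y, (hmemR _).mpr hxy_inf, rfl⟩
      · exact hP0le _ _ hxy_inf hx (fun v => by rw [hinf v]; exact inf_le_left)
      · exact hP0le _ _ hxy_inf hy (fun v => by rw [hinf v]; exact inf_le_right)
      · intro c hc hca hcb
        rw [← hRQ] at hc
        obtain ⟨z, hzR, hphz⟩ := hc
        rw [hmemR] at hzR
        subst hphz
        have h1 := hP0le' z x hzR hx hca
        have h2 := hP0le' z y hzR hy hcb
        exact hP0le z (x ⊓ y) hzR hxy_inf
          (fun v => by rw [hinf v]; exact le_inf (h1 v) (h2 v))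
    · refine ⟨?_, ?_, ?_, ?_⟩
      · rw [← hRQ]; exact ⟨x ⊔ y, (hmemR _).mpr hxy_sup, rfl⟩
      · exact hP0le _ _ hx hxy_sup (fun v => by rw [hsup v]; exact le_sup_left)
      · exact hP0le _ _ hy hxy_sup (fun v => by rw [hsup v]; exact le_sup_right)
      · intro c hc hca hcb
        rw [← hRQ] at hc
        obtain ⟨z, hzR, hphz⟩ := hc
        rw [hmemR] at hzR
        subst hphz
        have h1 := hP0le' x z hx hzR hca
        have h2 := hP0le' y z hy hzR hcb
        exact hP0le (x ⊔ y) z hxy_sup hzR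
          (fun v => by rw [hsup v]; exact sup_le (h1 v) (h2 v))
  refine ⟨?_, part2⟩
  intro a ha b hb
  rw [← hRQ] at ha hb
  obtain ⟨u, huR, rfl⟩ := ha
  obtain ⟨v, hvR, rfl⟩ := hb
  obtain ⟨hm, hj⟩ := part2 u huR v hvR
  exact ⟨⟨_, hm⟩, ⟨_, hj⟩⟩
end

section
/- Let G be a connected simple graph on the vertex set {0,1,…,n}. Each connected component of the poset P₀ of acyclic orientations of G with 0 as a sink is a distributive lattice; that is, any two elements of the component have a meet and a join within the component, and these operations satisfy the distributive laws. -/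
section Aux

variable {n : ℕ} {G : SimpleGraph (Fin (n + 1))}
variable {d d' e f : Fin (n + 1) → Fin (n + 1) → Prop}

/-- The orientation obtained from `d` by a firing-count vector `ν`. -/
def FiredBy {n : ℕ} (d : Fin (n + 1) → Fin (n + 1) → Prop) (ν : Fin (n + 1) → ℤ) :
    Fin (n + 1) → Fin (n + 1) → Prop :=
  fun j k => (d j k ∧ ν j = ν k) ∨ (d k j ∧ ν j + 1 = ν k)

/-- Edge compatibility of a firing vector with an orientation. -/
def ECond {n : ℕ} (G : SimpleGraph (Fin (n + 1)))
    (d : Fin (n + 1) → Fin (n + 1) → Prop) (ν : Fin (n + 1) → ℤ) : Prop :=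
  ∀ j k, G.Adj j k →
    (ν k = ν j + 1 → d k j) ∧ (ν k = ν j ∨ ν k = ν j + 1 ∨ ν j = ν k + 1)

lemma rel_ext {d d' : Fin (n + 1) → Fin (n + 1) → Prop}
    (h : ∀ j k, d j k ↔ d' j k) : d = d' :=
  funext fun j => funext fun k => propext (h j k)

namespace IsOrientation

lemma adj (ho : IsOrientation G d) {j k} (h : d j k) : G.Adj j k := ho.1 _ _ h

lemma not_rev (ho : IsOrientation G d) {j k} (h : d j k) : ¬ d k j :=
  (ho.2 _ _ (ho.1 _ _ h)).mp h

lemma irrefl (ho : IsOrientation G d) (j : Fin (n + 1)) : ¬ d j j :=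
  fun h => G.irrefl (ho.1 _ _ h)

lemma resolve (ho : IsOrientation G d) {j k} (hadj : G.Adj j k) (h : ¬ d k j) : d j k := by
  have := ho.2 k j hadj.symm
  tauto

end IsOrientation

lemma firedBy_eq_self {ν : Fin (n + 1) → ℤ} (h : ∀ v, ν v = 0)
    (d : Fin (n + 1) → Fin (n + 1) → Prop) : FiredBy d ν = d := by
  apply rel_ext; intro j k
  show (d j k ∧ ν j = ν k) ∨ (d k j ∧ ν j + 1 = ν k) ↔ d j k
  have hj := h j; have hk := h k
  constructor
  · rintro (⟨h1, -⟩ | ⟨-, h2⟩)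
    · exact h1
    · omega
  · intro h1; exact Or.inl ⟨h1, by omega⟩

lemma eCond_of_orientation (ho : IsOrientation G d) (ho' : IsOrientation G d')
    {ν : Fin (n + 1) → ℤ} (h : d' = FiredBy d ν) : ECond G d ν := by
  intro j k hadj
  have hjk : d' j k ↔ (d j k ∧ ν j = ν k) ∨ (d k j ∧ ν j + 1 = ν k) := by rw [h]; rfl
  have hkj : d' k j ↔ (d k j ∧ ν k = ν j) ∨ (d j k ∧ ν k + 1 = ν j) := by rw [h]; rfl
  have honed : d j k ↔ ¬ d k j := ho.2 _ _ hadj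
  constructor
  · intro hv
    by_contra hkj'
    have h1 : ¬ d' j k := by
      rw [hjk]; rintro (⟨-, h2⟩ | ⟨h2, -⟩)
      · omega
      · exact hkj' h2
    have h2 : ¬ d' k j := by
      rw [hkj]; rintro (⟨h2, -⟩ | ⟨-, h2⟩)
      · exact hkj' h2
      · omega
    exact h2 (ho'.resolve hadj.symm h1)
  · by_contra hb
    push_neg at hb
    obtain ⟨h1, h2, h3⟩ := hb
    have hnjk : ¬ d' j k := by
      rw [hjk]; rintro (⟨-, h4⟩ | ⟨-, h4⟩) <;> omega
    have hnkj : ¬ d' k j := by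
      rw [hkj]; rintro (⟨-, h4⟩ | ⟨-, h4⟩) <;> omega
    exact hnkj (ho'.resolve hadj.symm hnjk)

end Aux
section Aux2

variable {n : ℕ} {G : SimpleGraph (Fin (n + 1))}
variable {d d' e f : Fin (n + 1) → Fin (n + 1) → Prop}
variable {ν μ : Fin (n + 1) → ℤ}

lemma firedBy_orientation (ho : IsOrientation G d) (hE : ECond G d ν) :
    IsOrientation G (FiredBy d ν) := by
  constructor
  · rintro j k (⟨h1, -⟩ | ⟨h1, -⟩)
    · exact ho.adj h1
    · exact (ho.adj h1).symm
  · intro j k hadj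
    obtain ⟨himp, hbd⟩ := hE j k hadj
    obtain ⟨himp', hbd'⟩ := hE k j hadj.symm
    have honed : d j k ↔ ¬ d k j := ho.2 _ _ hadj
    show (d j k ∧ ν j = ν k) ∨ (d k j ∧ ν j + 1 = ν k) ↔
      ¬ ((d k j ∧ ν k = ν j) ∨ (d j k ∧ ν k + 1 = ν j))
    constructor
    · rintro (⟨h1, h2⟩ | ⟨h1, h2⟩) <;>
        rintro (⟨h3, h4⟩ | ⟨h3, h4⟩) <;> first | omega | exact honed.mp h1 h3 | exact honed.mp h3 h1
    · intro hne
      rcases hbd with h1 | h1 | h1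
      · by_cases hd : d j k
        · exact Or.inl ⟨hd, by omega⟩
        · exact absurd (Or.inl ⟨ho.resolve hadj.symm hd, by omega⟩) hne
      · exact Or.inr ⟨himp h1, by omega⟩
      · exact absurd (Or.inr ⟨himp' h1, by omega⟩) hne

lemma firedBy_comp (ho : IsOrientation G d) (hE : ECond G d ν)
    (μ : Fin (n + 1) → ℤ) :
    FiredBy (FiredBy d ν) μ = FiredBy d (fun v => ν v + μ v) := by
  apply rel_ext; intro j k
  show (((d j k ∧ ν j = ν k) ∨ (d k j ∧ ν j + 1 = ν k)) ∧ μ j = μ k) ∨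
      (((d k j ∧ ν k = ν j) ∨ (d j k ∧ ν k + 1 = ν j)) ∧ μ j + 1 = μ k) ↔
    (d j k ∧ ν j + μ j = ν k + μ k) ∨ (d k j ∧ ν j + μ j + 1 = ν k + μ k)
  constructor
  · rintro (⟨h1 | h1, h2⟩ | ⟨h1 | h1, h2⟩)
    · exact Or.inl ⟨h1.1, by omega⟩
    · exact Or.inr ⟨h1.1, by have := h1.2; omega⟩
    · exact Or.inr ⟨h1.1, by have := h1.2; omega⟩
    · exact Or.inl ⟨h1.1, by have := h1.2; omega⟩
  · rintro (⟨h1, h2⟩ | ⟨h1, h2⟩)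
    · obtain ⟨himp, hbd⟩ := hE j k (ho.adj h1)
      rcases hbd with h3 | h3 | h3
      · exact Or.inl ⟨Or.inl ⟨h1, by omega⟩, by omega⟩
      · exact absurd h1 (fun h => ho.not_rev (himp h3) h)
      · exact Or.inr ⟨Or.inr ⟨h1, by omega⟩, by omega⟩
    · obtain ⟨himp, hbd⟩ := hE j k (ho.adj h1).symm
      rcases hbd with h3 | h3 | h3
      · exact Or.inr ⟨Or.inl ⟨h1, by omega⟩, by omega⟩
      · exact Or.inl ⟨Or.inr ⟨h1, by omega⟩, by omega⟩
      · exact absurd ((hE k j (ho.adj h1)).1 h3) (fun h => ho.not_rev h h1)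

lemma firedBy_inv (ho : IsOrientation G d) (hE : ECond G d ν) :
    FiredBy (FiredBy d ν) (fun v => - ν v) = d := by
  rw [firedBy_comp ho hE]
  exact firedBy_eq_self (fun v => by omega) d

end Aux2
section Aux3

variable {n : ℕ} {G : SimpleGraph (Fin (n + 1))}
variable {d d' e f : Fin (n + 1) → Fin (n + 1) → Prop}
variable {ν μ : Fin (n + 1) → ℤ}

lemma acyclic_transfer {i : Fin (n + 1)} (hno : ∀ k, ¬ e i k)
    (hagree : ∀ j k, j ≠ i → k ≠ i → e j k → f j k)
    (hf : ∀ v, ¬ Relation.TransGen f v v) : ∀ v, ¬ Relation.TransGen e v v := by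
  have key : ∀ v w, Relation.TransGen e v w → w ≠ i → Relation.TransGen f v w ∧ v ≠ i := by
    intro v w h
    induction h with
    | single h1 =>
      intro hw
      have hv : v ≠ i := fun hv => hno _ (hv ▸ h1)
      exact ⟨Relation.TransGen.single (hagree _ _ hv hw h1), hv⟩
    | @tail b c h1 h2 ih =>
      intro hw
      have hb : b ≠ i := fun hb => hno _ (hb ▸ h2)
      obtain ⟨hfp, hv⟩ := ih hb
      exact ⟨hfp.tail (hagree _ _ hb hw h2), hv⟩
  have hstart : ∀ a b, Relation.TransGen e a b → a ≠ i := by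
    intro a b h
    induction h with
    | single h1 => exact fun ha => hno _ (ha ▸ h1)
    | tail _ _ ih => exact ih
  intro v hv
  by_cases hvi : v = i
  · exact hstart _ _ hv hvi
  · exact hf v (key v v hv hvi).1

lemma acyclic_transfer' {i : Fin (n + 1)} (hno : ∀ k, ¬ e k i)
    (hagree : ∀ j k, j ≠ i → k ≠ i → e j k → f j k)
    (hf : ∀ v, ¬ Relation.TransGen f v v) : ∀ v, ¬ Relation.TransGen e v v := by
  intro v hv
  have hswap : ∀ w, ¬ Relation.TransGen (Function.swap f) w w := by
    intro w hw; exact hf w (Relation.transGen_swap.mp hw)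
  have hno' : ∀ k, ¬ (Function.swap e) i k := fun k h => hno k h
  have hagree' : ∀ j k, j ≠ i → k ≠ i → (Function.swap e) j k → (Function.swap f) j k :=
    fun j k hj hk h => hagree k j hk hj h
  exact acyclic_transfer hno' hagree' hswap v (Relation.transGen_swap.mpr hv)

/-- Uniqueness of the firing vector, given connectivity. -/
lemma nu_unique (hG : G.Connected) (ho : IsOrientation G d) (ho' : IsOrientation G d')
    (h1 : d' = FiredBy d ν) (h2 : d' = FiredBy d μ) (h0 : ν 0 = μ 0) : ν = μ := by
  have edge : ∀ j k, G.Adj j k → ν j - μ j = ν k - μ k := by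
    intro j k hadj
    have hone : d' j k ∨ d' k j := by
      by_cases h : d' j k
      · exact Or.inl h
      · exact Or.inr (ho'.resolve hadj.symm h)
    rcases hone with h | h
    · have e1 : (d j k ∧ ν j = ν k) ∨ (d k j ∧ ν j + 1 = ν k) := by rw [h1] at h; exact h
      have e2 : (d j k ∧ μ j = μ k) ∨ (d k j ∧ μ j + 1 = μ k) := by rw [h2] at h; exact h
      rcases e1 with ⟨ha, hb⟩ | ⟨ha, hb⟩ <;> rcases e2 with ⟨hc, hd1⟩ | ⟨hc, hd1⟩ <;>
        first | omega | exact absurd hc (ho.not_rev ha) | exact absurd ha (ho.not_rev hc)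
    · have e1 : (d k j ∧ ν k = ν j) ∨ (d j k ∧ ν k + 1 = ν j) := by rw [h1] at h; exact h
      have e2 : (d k j ∧ μ k = μ j) ∨ (d j k ∧ μ k + 1 = μ j) := by rw [h2] at h; exact h
      rcases e1 with ⟨ha, hb⟩ | ⟨ha, hb⟩ <;> rcases e2 with ⟨hc, hd1⟩ | ⟨hc, hd1⟩ <;>
        first | omega | exact absurd hc (ho.not_rev ha) | exact absurd ha (ho.not_rev hc)
  have walk : ∀ (v w : Fin (n + 1)) (_ : G.Walk v w), ν v - μ v = ν w - μ w := by
    intro v w p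
    induction p with
    | nil => rfl
    | cons h p ih => rw [edge _ _ h]; exact ih
  funext v
  have := walk v 0 (hG.preconnected v 0).some
  omega

/-- Splitting off the positive part of a compatible vector. -/
lemma eCond_posPart (hE : ECond G d ν) : ECond G d (fun v => max (ν v) 0) := by
  intro j k hadj
  obtain ⟨himp, hbd⟩ := hE j k hadj
  refine ⟨fun h => himp ?_, ?_⟩
  · have h' : max (ν k) 0 = max (ν j) 0 + 1 := h
    omega
  · show max (ν k) 0 = max (ν j) 0 ∨ max (ν k) 0 = max (ν j) 0 + 1 ∨
      max (ν j) 0 = max (ν k) 0 + 1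
    omega

lemma eCond_negPart (hE : ECond G d ν) : ECond G d (fun v => min (ν v) 0) := by
  intro j k hadj
  obtain ⟨himp, hbd⟩ := hE j k hadj
  refine ⟨fun h => himp ?_, ?_⟩
  · have h' : min (ν k) 0 = min (ν j) 0 + 1 := h
    omega
  · show min (ν k) 0 = min (ν j) 0 ∨ min (ν k) 0 = min (ν j) 0 + 1 ∨
      min (ν j) 0 = min (ν k) 0 + 1
    omega

end Aux3
section Aux4

variable {n : ℕ} {G : SimpleGraph (Fin (n + 1))}
variable {d : Fin (n + 1) → Fin (n + 1) → Prop}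

lemma fireStepUp (hd : MemP0 G d) {i : Fin (n + 1)} (hi0 : i ≠ 0) (hnadj : ¬ G.Adj i 0)
    (hs : IsSource G d i) :
    MemP0 G (FiredBy d (fun v => if v = i then 1 else 0)) ∧
      P0Step G d (FiredBy d (fun v => if v = i then 1 else 0)) := by
  obtain ⟨⟨ho, hacyc⟩, hsink⟩ := hd
  set e : Fin (n + 1) → ℤ := fun v => if v = i then 1 else 0 with he
  have hev : ∀ v, v ≠ i → e v = 0 := fun v hv => if_neg hv
  have hei : e i = 1 := if_pos rfl
  have hE : ECond G d e := by
    intro j k hadj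
    by_cases hj : j = i <;> by_cases hk : k = i
    · exact absurd (hj ▸ hk ▸ hadj) (G.irrefl)
    · rw [hj]
      refine ⟨fun h => absurd h (by rw [hei, hev k hk]; omega), by rw [hei, hev k hk]; omega⟩
    · rw [hk]
      refine ⟨fun _ => hs j (hk ▸ hadj).symm, by rw [hei, hev j hj]; omega⟩
    · refine ⟨fun h => absurd h (by rw [hev k hk, hev j hj]; omega),
        by rw [hev k hk, hev j hj]; omega⟩
  have hno : ∀ k, ¬ FiredBy d e i k := by
    rintro k (⟨h1, h2⟩ | ⟨h1, h2⟩)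
    · by_cases hk : k = i
      · exact ho.irrefl i (hk ▸ h1)
      · rw [hei, hev k hk] at h2; omega
    · by_cases hk : k = i
      · exact ho.irrefl i (hk ▸ h1)
      · rw [hei, hev k hk] at h2; omega
  have hrev : ∀ j, j ≠ i → (FiredBy d e j i ↔ d i j) := by
    intro j hj
    show (d j i ∧ e j = e i) ∨ (d i j ∧ e j + 1 = e i) ↔ d i j
    rw [hei, hev j hj]
    constructor
    · rintro (⟨h1, h2⟩ | ⟨h1, -⟩)
      · omega
      · exact h1
    · intro h1; exact Or.inr ⟨h1, by omega⟩
  have hsame : ∀ j k, j ≠ i → k ≠ i → (FiredBy d e j k ↔ d j k) := by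
    intro j k hj hk
    show (d j k ∧ e j = e k) ∨ (d k j ∧ e j + 1 = e k) ↔ d j k
    rw [hev j hj, hev k hk]
    constructor
    · rintro (⟨h1, -⟩ | ⟨-, h2⟩)
      · exact h1
      · omega
    · intro h1; exact Or.inl ⟨h1, rfl⟩
  have hmem : MemP0 G (FiredBy d e) := by
    refine ⟨⟨firedBy_orientation ho hE, ?_⟩, ?_⟩
    · exact acyclic_transfer hno (fun j k hj hk h => (hsame j k hj hk).mp h) hacyc
    · intro j hadj
      have hj : j ≠ i := fun h => hnadj (h ▸ hadj.symm)
      exact (hsame j 0 hj (Ne.symm hi0)).mpr (hsink j hadj)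
  refine ⟨hmem, ⟨⟨ho, hacyc⟩, hsink⟩, hmem, i, hi0, hs, ?_⟩
  intro j k
  by_cases hj : j = i
  · subst hj
    constructor
    · intro h; exact absurd h (hno k)
    · rintro (⟨-, h1⟩ | ⟨⟨hji, -⟩, -⟩)
      · exact absurd (hs k (ho.adj h1).symm) (ho.not_rev h1)
      · exact absurd rfl hji
  · by_cases hk : k = i
    · subst hk
      rw [hrev j hj]
      constructor
      · intro h; exact Or.inl ⟨Or.inr rfl, h⟩
      · rintro (⟨-, h1⟩ | ⟨⟨-, hki⟩, -⟩)
        · exact h1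
        · exact absurd rfl hki
    · rw [hsame j k hj hk]
      constructor
      · intro h; exact Or.inr ⟨⟨hj, hk⟩, h⟩
      · rintro (⟨hjk, h1⟩ | ⟨-, h1⟩)
        · rcases hjk with h2 | h2
          · exact absurd h2 hj
          · exact absurd h2 hk
        · exact h1

lemma fireStepDown (hd : MemP0 G d) {i : Fin (n + 1)} (hi0 : i ≠ 0) (hnadj : ¬ G.Adj i 0)
    (hs : IsSink G d i) :
    MemP0 G (FiredBy d (fun v => if v = i then -1 else 0)) ∧
      P0Step G (FiredBy d (fun v => if v = i then -1 else 0)) d := by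
  obtain ⟨⟨ho, hacyc⟩, hsink⟩ := hd
  set e : Fin (n + 1) → ℤ := fun v => if v = i then -1 else 0 with he
  have hev : ∀ v, v ≠ i → e v = 0 := fun v hv => if_neg hv
  have hei : e i = -1 := if_pos rfl
  have hE : ECond G d e := by
    intro j k hadj
    by_cases hj : j = i <;> by_cases hk : k = i
    · exact absurd (hj ▸ hk ▸ hadj) (G.irrefl)
    · rw [hj]
      refine ⟨fun _ => hs k (hj ▸ hadj), by rw [hei, hev k hk]; omega⟩
    · rw [hk]
      refine ⟨fun h => absurd h (by rw [hei, hev j hj]; omega), by rw [hei, hev j hj]; omega⟩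
    · refine ⟨fun h => absurd h (by rw [hev k hk, hev j hj]; omega),
        by rw [hev k hk, hev j hj]; omega⟩
  have hno : ∀ k, ¬ FiredBy d e k i := by
    rintro k (⟨h1, h2⟩ | ⟨h1, h2⟩)
    · by_cases hk : k = i
      · exact ho.irrefl i (hk ▸ h1)
      · rw [hei, hev k hk] at h2; omega
    · by_cases hk : k = i
      · exact ho.irrefl i (hk ▸ h1)
      · rw [hei, hev k hk] at h2; omega
  have hrev : ∀ j, j ≠ i → (FiredBy d e i j ↔ d j i) := by
    intro j hj
    show (d i j ∧ e i = e j) ∨ (d j i ∧ e i + 1 = e j) ↔ d j i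
    rw [hei, hev j hj]
    constructor
    · rintro (⟨h1, h2⟩ | ⟨h1, -⟩)
      · omega
      · exact h1
    · intro h1; exact Or.inr ⟨h1, by omega⟩
  have hsame : ∀ j k, j ≠ i → k ≠ i → (FiredBy d e j k ↔ d j k) := by
    intro j k hj hk
    show (d j k ∧ e j = e k) ∨ (d k j ∧ e j + 1 = e k) ↔ d j k
    rw [hev j hj, hev k hk]
    constructor
    · rintro (⟨h1, -⟩ | ⟨-, h2⟩)
      · exact h1
      · omega
    · intro h1; exact Or.inl ⟨h1, rfl⟩
  have hmem : MemP0 G (FiredBy d e) := by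
    refine ⟨⟨firedBy_orientation ho hE, ?_⟩, ?_⟩
    · exact acyclic_transfer' hno (fun j k hj hk h => (hsame j k hj hk).mp h) hacyc
    · intro j hadj
      have hj : j ≠ i := fun h => hnadj (h ▸ hadj.symm)
      exact (hsame j 0 hj (Ne.symm hi0)).mpr (hsink j hadj)
  have hsource : IsSource G (FiredBy d e) i := by
    intro k hadj
    have hk : k ≠ i := fun h => G.irrefl (h ▸ hadj)
    exact (hrev k hk).mpr (hs k hadj)
  refine ⟨hmem, hmem, ⟨⟨ho, hacyc⟩, hsink⟩, i, hi0, hsource, ?_⟩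
  intro j k
  by_cases hj : j = i
  · subst hj
    constructor
    · intro h
      exact absurd (hs k (ho.adj h)) (fun h2 => ho.not_rev h h2)
    · rintro (⟨-, h1⟩ | ⟨⟨hji, -⟩, -⟩)
      · exact absurd h1 (hno k)
      · exact absurd rfl hji
  · by_cases hk : k = i
    · subst hk
      constructor
      · intro h; exact Or.inl ⟨Or.inr rfl, (hrev j hj).mpr h⟩
      · rintro (⟨-, h1⟩ | ⟨⟨-, hki⟩, -⟩)
        · exact (hrev j hj).mp h1
        · exact absurd rfl hki
    · constructor
      · intro h; exact Or.inr ⟨⟨hj, hk⟩, (hsame j k hj hk).mpr h⟩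
      · rintro (⟨hjk, h1⟩ | ⟨-, h1⟩)
        · rcases hjk with h2 | h2
          · exact absurd h2 hj
          · exact absurd h2 hk
        · exact (hsame j k hj hk).mp h1

end Aux4
section Aux5

variable {n : ℕ} {G : SimpleGraph (Fin (n + 1))}
variable {d : Fin (n + 1) → Fin (n + 1) → Prop}

lemma firedBy_plus_apply (ho : IsOrientation G d) (i : Fin (n + 1)) :
    (∀ k, ¬ FiredBy d (fun v => if v = i then 1 else 0) i k) ∧
    (∀ j, j ≠ i → (FiredBy d (fun v => if v = i then 1 else 0) j i ↔ d i j)) ∧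
    (∀ j k, j ≠ i → k ≠ i → (FiredBy d (fun v => if v = i then 1 else 0) j k ↔ d j k)) := by
  set e : Fin (n + 1) → ℤ := fun v => if v = i then 1 else 0 with he
  have hev : ∀ v, v ≠ i → e v = 0 := fun v hv => if_neg hv
  have hei : e i = 1 := if_pos rfl
  refine ⟨?_, ?_, ?_⟩
  · rintro k (⟨h1, h2⟩ | ⟨h1, h2⟩)
    · by_cases hk : k = i
      · exact ho.irrefl i (hk ▸ h1)
      · rw [hei, hev k hk] at h2; omega
    · by_cases hk : k = i
      · exact ho.irrefl i (hk ▸ h1)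
      · rw [hei, hev k hk] at h2; omega
  · intro j hj
    show (d j i ∧ e j = e i) ∨ (d i j ∧ e j + 1 = e i) ↔ d i j
    rw [hei, hev j hj]
    constructor
    · rintro (⟨h1, h2⟩ | ⟨h1, -⟩)
      · omega
      · exact h1
    · intro h1; exact Or.inr ⟨h1, by omega⟩
  · intro j k hj hk
    show (d j k ∧ e j = e k) ∨ (d k j ∧ e j + 1 = e k) ↔ d j k
    rw [hev j hj, hev k hk]
    constructor
    · rintro (⟨h1, -⟩ | ⟨-, h2⟩)
      · exact h1
      · omega
    · intro h1; exact Or.inl ⟨h1, rfl⟩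

lemma firedBy_minus_apply (ho : IsOrientation G d) (i : Fin (n + 1)) :
    (∀ k, ¬ FiredBy d (fun v => if v = i then -1 else 0) k i) ∧
    (∀ j, j ≠ i → (FiredBy d (fun v => if v = i then -1 else 0) i j ↔ d j i)) ∧
    (∀ j k, j ≠ i → k ≠ i →
      (FiredBy d (fun v => if v = i then -1 else 0) j k ↔ d j k)) := by
  set e : Fin (n + 1) → ℤ := fun v => if v = i then -1 else 0 with he
  have hev : ∀ v, v ≠ i → e v = 0 := fun v hv => if_neg hv
  have hei : e i = -1 := if_pos rfl
  refine ⟨?_, ?_, ?_⟩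
  · rintro k (⟨h1, h2⟩ | ⟨h1, h2⟩)
    · by_cases hk : k = i
      · exact ho.irrefl i (hk ▸ h1)
      · rw [hei, hev k hk] at h2; omega
    · by_cases hk : k = i
      · exact ho.irrefl i (hk ▸ h1)
      · rw [hei, hev k hk] at h2; omega
  · intro j hj
    show (d i j ∧ e i = e j) ∨ (d j i ∧ e i + 1 = e j) ↔ d j i
    rw [hei, hev j hj]
    constructor
    · rintro (⟨h1, h2⟩ | ⟨h1, -⟩)
      · omega
      · exact h1
    · intro h1; exact Or.inr ⟨h1, by omega⟩
  · intro j k hj hk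
    show (d j k ∧ e j = e k) ∨ (d k j ∧ e j + 1 = e k) ↔ d j k
    rw [hev j hj, hev k hk]
    constructor
    · rintro (⟨h1, -⟩ | ⟨-, h2⟩)
      · exact h1
      · omega
    · intro h1; exact Or.inl ⟨h1, rfl⟩

/-- Main upward theorem: a nonnegative compatible firing vector is realized
by an actual firing sequence. -/
lemma fireUp : ∀ (N : ℕ) (d : Fin (n + 1) → Fin (n + 1) → Prop) (ν : Fin (n + 1) → ℤ),
    MemP0 G d → (∀ v, 0 ≤ ν v) → ν 0 = 0 → (∀ j, G.Adj j 0 → ν j = 0) → ECond G d ν →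
    (∑ v, (ν v).toNat) = N →
    MemP0 G (FiredBy d ν) ∧ P0le G d (FiredBy d ν) := by
  intro N
  induction N using Nat.strong_induction_on with
  | _ N ih =>
    intro d ν hd hpos h0 hadj0 hE hsum
    by_cases hz : ∀ v, ν v = 0
    · rw [firedBy_eq_self hz]
      exact ⟨hd, Relation.ReflTransGen.refl⟩
    · push_neg at hz
      obtain ⟨w, hw⟩ := hz
      obtain ⟨m, -, hm⟩ := Finset.exists_max_image Finset.univ ν ⟨w, Finset.mem_univ w⟩
      have hm' : ∀ v, ν v ≤ ν m := fun v => hm v (Finset.mem_univ v)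
      have hacyc := hd.1.2
      have ho := hd.1.1
      haveI : IsTrans (Fin (n + 1)) (Relation.TransGen d) :=
        ⟨fun a b c h1 h2 => h1.trans h2⟩
      haveI : IsIrrefl (Fin (n + 1)) (Relation.TransGen d) := ⟨hacyc⟩
      obtain ⟨i, hiS, himin⟩ :=
        (Finite.wellFounded_of_trans_of_irrefl (Relation.TransGen d)).has_min
          {v | ν v = ν m} ⟨m, rfl⟩
      have hiS' : ν i = ν m := hiS
      have hipos : 1 ≤ ν i := by
        have h1 := hpos w; have h2 := hm' w
        omega
      have hsrc : IsSource G d i := by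
        intro j hadj
        obtain ⟨himp, hbd⟩ := hE j i hadj.symm
        by_cases hji : ν j = ν m
        · have hnd : ¬ d j i := fun h => himin j hji (Relation.TransGen.single h)
          exact ho.resolve hadj hnd
        · have hj2 := hm' j
          exact himp (by omega)
      have hi0 : i ≠ 0 := fun h => by rw [h, h0] at hipos; omega
      have hinadj : ¬ G.Adj i 0 := fun h => by have := hadj0 i h; omega
      obtain ⟨hmem1, hstep⟩ := fireStepUp hd hi0 hinadj hsrc
      obtain ⟨hno, hrev, hsame⟩ := firedBy_plus_apply ho i
      set eI : Fin (n + 1) → ℤ := fun v => if v = i then 1 else 0 with heI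
      set d1 := FiredBy d eI with hd1
      set ν' : Fin (n + 1) → ℤ := fun v => if v = i then ν v - 1 else ν v with hν'
      have hv'i : ν' i = ν i - 1 := if_pos rfl
      have hv'v : ∀ v, v ≠ i → ν' v = ν v := fun v hv => if_neg hv
      have heIi : eI i = 1 := if_pos rfl
      have heIv : ∀ v, v ≠ i → eI v = 0 := fun v hv => if_neg hv
      have hEI : ECond G d eI := by
        intro j k hadj
        by_cases hj : j = i <;> by_cases hk : k = i
        · exact absurd (hj ▸ hk ▸ hadj) G.irrefl
        · have e1 : eI j = 1 := by rw [hj]; exact heIi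
          have e2 : eI k = 0 := heIv k hk
          exact ⟨fun h => absurd h (by omega), by omega⟩
        · have e1 : eI k = 1 := by rw [hk]; exact heIi
          have e2 : eI j = 0 := heIv j hj
          refine ⟨fun _ => ?_, by omega⟩
          rw [hk]
          exact hsrc j (hk ▸ hadj).symm
        · have e1 : eI j = 0 := heIv j hj
          have e2 : eI k = 0 := heIv k hk
          exact ⟨fun h => absurd h (by omega), by omega⟩
      have hE' : ECond G d1 ν' := by
        intro j k hadj
        by_cases hj : j = i <;> by_cases hk : k = i
        · exact absurd (hj ▸ hk ▸ hadj) G.irrefl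
        · -- j = i, k ≠ i : edge from i
          have hadj' : G.Adj i k := hj ▸ hadj
          have e1 : ν' j = ν i - 1 := by rw [hj]; exact hv'i
          have e2 : ν' k = ν k := hv'v k hk
          obtain ⟨himp, hbd⟩ := hE i k hadj'
          have hbk := hm' k
          refine ⟨fun _ => ?_, ?_⟩
          · rw [hj]
            exact (hrev k hk).mpr (hsrc k hadj')
          · rcases hbd with h | h | h <;> omega
        · -- k = i, j ≠ i
          have hadj' : G.Adj j i := hk ▸ hadj
          have e1 : ν' k = ν i - 1 := by rw [hk]; exact hv'i
          have e2 : ν' j = ν j := hv'v j hj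
          obtain ⟨himp, hbd⟩ := hE j i hadj'
          have hbj := hm' j
          refine ⟨fun h => ?_, ?_⟩
          · exfalso; rcases hbd with h' | h' | h' <;> omega
          · rcases hbd with h' | h' | h' <;> omega
        · have e1 : ν' j = ν j := hv'v j hj
          have e2 : ν' k = ν k := hv'v k hk
          obtain ⟨himp, hbd⟩ := hE j k hadj
          refine ⟨fun h => (hsame k j hk hj).mpr (himp (by omega)), by rcases hbd with h | h | h <;> omega⟩
      have hpos' : ∀ v, 0 ≤ ν' v := by
        intro v
        by_cases hv : v = i
        · rw [hv, hv'i]; omega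
        · rw [hv'v v hv]; exact hpos v
      have h0' : ν' 0 = 0 := by rw [hv'v 0 (Ne.symm hi0)]; exact h0
      have hadj0' : ∀ j, G.Adj j 0 → ν' j = 0 := by
        intro j hadj
        have hj : j ≠ i := fun h => hinadj (h ▸ hadj)
        rw [hv'v j hj]; exact hadj0 j hadj
      have hsum' : (∑ v, (ν' v).toNat) < N := by
        have hsplit := Finset.add_sum_erase Finset.univ (fun v => (ν v).toNat)
          (Finset.mem_univ i)
        have hsplit' := Finset.add_sum_erase Finset.univ (fun v => (ν' v).toNat)
          (Finset.mem_univ i)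
        have heq : ∑ v ∈ Finset.univ.erase i, (ν' v).toNat
            = ∑ v ∈ Finset.univ.erase i, (ν v).toNat :=
          Finset.sum_congr rfl (fun v hv => by rw [hv'v v (Finset.ne_of_mem_erase hv)])
        rw [heq] at hsplit'
        rw [← hsum, ← hsplit, ← hsplit', hv'i]
        omega
      obtain ⟨hmem2, hle2⟩ :=
        ih _ hsum' d1 ν' hmem1 hpos' h0' hadj0' hE' rfl
      have hfun : (fun v => eI v + ν' v) = ν := by
        funext v
        by_cases hv : v = i
        · have e1 : eI v = 1 := by rw [hv]; exact heIi
          have e2 : ν' v = ν v - 1 := by rw [hv]; exact hv'i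
          omega
        · have e1 : eI v = 0 := heIv v hv
          have e2 : ν' v = ν v := hv'v v hv
          omega
      have hcomp : FiredBy d1 ν' = FiredBy d ν := by
        rw [hd1, firedBy_comp ho hEI, hfun]
      rw [← hcomp]
      exact ⟨hmem2, Relation.ReflTransGen.head hstep hle2⟩

end Aux5
section Aux6

variable {n : ℕ} {G : SimpleGraph (Fin (n + 1))}

/-- Main downward theorem: a nonpositive compatible firing vector is realized by
a firing sequence going up to `d`. -/
lemma fireDown : ∀ (N : ℕ) (d : Fin (n + 1) → Fin (n + 1) → Prop) (ν : Fin (n + 1) → ℤ),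
    MemP0 G d → (∀ v, ν v ≤ 0) → ν 0 = 0 → (∀ j, G.Adj j 0 → ν j = 0) → ECond G d ν →
    (∑ v, (-ν v).toNat) = N →
    MemP0 G (FiredBy d ν) ∧ P0le G (FiredBy d ν) d := by
  intro N
  induction N using Nat.strong_induction_on with
  | _ N ih =>
    intro d ν hd hneg h0 hadj0 hE hsum
    by_cases hz : ∀ v, ν v = 0
    · rw [firedBy_eq_self hz]
      exact ⟨hd, Relation.ReflTransGen.refl⟩
    · push_neg at hz
      obtain ⟨w, hw⟩ := hz
      obtain ⟨m, -, hm⟩ := Finset.exists_min_image Finset.univ ν ⟨w, Finset.mem_univ w⟩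
      have hm' : ∀ v, ν m ≤ ν v := fun v => hm v (Finset.mem_univ v)
      have hacyc := hd.1.2
      have ho := hd.1.1
      haveI : IsTrans (Fin (n + 1)) (Relation.TransGen (Function.swap d)) :=
        ⟨fun a b c h1 h2 => h1.trans h2⟩
      haveI : IsIrrefl (Fin (n + 1)) (Relation.TransGen (Function.swap d)) :=
        ⟨fun v hv => hacyc v (Relation.transGen_swap.mp hv)⟩
      obtain ⟨i, hiS, himin⟩ :=
        (Finite.wellFounded_of_trans_of_irrefl
          (Relation.TransGen (Function.swap d))).has_min {v | ν v = ν m} ⟨m, rfl⟩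
      have hiS' : ν i = ν m := hiS
      have hineg : ν i ≤ -1 := by
        have h1 := hneg w; have h2 := hm' w
        omega
      have hsink : IsSink G d i := by
        intro j hadj
        obtain ⟨himp, hbd⟩ := hE i j hadj
        by_cases hji : ν j = ν m
        · have hnd : ¬ d i j := fun h => himin j hji (Relation.TransGen.single h)
          exact ho.resolve hadj.symm hnd
        · have hj2 := hm' j
          exact himp (by omega)
      have hi0 : i ≠ 0 := fun h => by rw [h, h0] at hineg; omega
      have hinadj : ¬ G.Adj i 0 := fun h => by have := hadj0 i h; omega
      obtain ⟨hmem1, hstep⟩ := fireStepDown hd hi0 hinadj hsink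
      obtain ⟨hno, hrev, hsame⟩ := firedBy_minus_apply ho i
      set eI : Fin (n + 1) → ℤ := fun v => if v = i then -1 else 0 with heI
      set d1 := FiredBy d eI with hd1
      set ν' : Fin (n + 1) → ℤ := fun v => if v = i then ν v + 1 else ν v with hν'
      have hv'i : ν' i = ν i + 1 := if_pos rfl
      have hv'v : ∀ v, v ≠ i → ν' v = ν v := fun v hv => if_neg hv
      have heIi : eI i = -1 := if_pos rfl
      have heIv : ∀ v, v ≠ i → eI v = 0 := fun v hv => if_neg hv
      have hEI : ECond G d eI := by
        intro j k hadj
        by_cases hj : j = i <;> by_cases hk : k = i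
        · exact absurd (hj ▸ hk ▸ hadj) G.irrefl
        · have e1 : eI j = -1 := by rw [hj]; exact heIi
          have e2 : eI k = 0 := heIv k hk
          refine ⟨fun _ => ?_, by omega⟩
          rw [hj]
          exact hsink k (hj ▸ hadj)
        · have e1 : eI k = -1 := by rw [hk]; exact heIi
          have e2 : eI j = 0 := heIv j hj
          exact ⟨fun h => absurd h (by omega), by omega⟩
        · have e1 : eI j = 0 := heIv j hj
          have e2 : eI k = 0 := heIv k hk
          exact ⟨fun h => absurd h (by omega), by omega⟩
      have hE' : ECond G d1 ν' := by
        intro j k hadj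
        by_cases hj : j = i <;> by_cases hk : k = i
        · exact absurd (hj ▸ hk ▸ hadj) G.irrefl
        · -- j = i, k ≠ i
          have hadj' : G.Adj i k := hj ▸ hadj
          have e1 : ν' j = ν i + 1 := by rw [hj]; exact hv'i
          have e2 : ν' k = ν k := hv'v k hk
          obtain ⟨himp, hbd⟩ := hE i k hadj'
          have hbk := hm' k
          refine ⟨fun h => ?_, ?_⟩
          · exfalso; rcases hbd with h' | h' | h' <;> omega
          · rcases hbd with h' | h' | h' <;> omega
        · -- k = i, j ≠ i
          have hadj' : G.Adj j i := hk ▸ hadj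
          have e1 : ν' k = ν i + 1 := by rw [hk]; exact hv'i
          have e2 : ν' j = ν j := hv'v j hj
          obtain ⟨himp, hbd⟩ := hE j i hadj'
          have hbj := hm' j
          refine ⟨fun _ => ?_, ?_⟩
          · rw [hk]
            exact (hrev j hj).mpr (hsink j hadj'.symm)
          · rcases hbd with h' | h' | h' <;> omega
        · have e1 : ν' j = ν j := hv'v j hj
          have e2 : ν' k = ν k := hv'v k hk
          obtain ⟨himp, hbd⟩ := hE j k hadj
          refine ⟨fun h => (hsame k j hk hj).mpr (himp (by omega)),
            by rcases hbd with h | h | h <;> omega⟩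
      have hneg' : ∀ v, ν' v ≤ 0 := by
        intro v
        by_cases hv : v = i
        · rw [hv, hv'i]; omega
        · rw [hv'v v hv]; exact hneg v
      have h0' : ν' 0 = 0 := by rw [hv'v 0 (Ne.symm hi0)]; exact h0
      have hadj0' : ∀ j, G.Adj j 0 → ν' j = 0 := by
        intro j hadj
        have hj : j ≠ i := fun h => hinadj (h ▸ hadj)
        rw [hv'v j hj]; exact hadj0 j hadj
      have hsum' : (∑ v, (-ν' v).toNat) < N := by
        have hsplit := Finset.add_sum_erase Finset.univ (fun v => (-ν v).toNat)
          (Finset.mem_univ i)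
        have hsplit' := Finset.add_sum_erase Finset.univ (fun v => (-ν' v).toNat)
          (Finset.mem_univ i)
        have heq : ∑ v ∈ Finset.univ.erase i, (-ν' v).toNat
            = ∑ v ∈ Finset.univ.erase i, (-ν v).toNat :=
          Finset.sum_congr rfl (fun v hv => by rw [hv'v v (Finset.ne_of_mem_erase hv)])
        rw [heq] at hsplit'
        rw [← hsum, ← hsplit, ← hsplit', hv'i]
        omega
      obtain ⟨hmem2, hle2⟩ :=
        ih _ hsum' d1 ν' hmem1 hneg' h0' hadj0' hE' rfl
      have hfun : (fun v => eI v + ν' v) = ν := by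
        funext v
        by_cases hv : v = i
        · have e1 : eI v = -1 := by rw [hv]; exact heIi
          have e2 : ν' v = ν v + 1 := by rw [hv]; exact hv'i
          omega
        · have e1 : eI v = 0 := heIv v hv
          have e2 : ν' v = ν v := hv'v v hv
          omega
      have hcomp : FiredBy d1 ν' = FiredBy d ν := by
        rw [hd1, firedBy_comp ho hEI, hfun]
      rw [← hcomp]
      exact ⟨hmem2, Relation.ReflTransGen.tail hle2 hstep⟩

end Aux6
section Aux7

variable {n : ℕ} {G : SimpleGraph (Fin (n + 1))}
variable {d d' a b : Fin (n + 1) → Fin (n + 1) → Prop}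
variable {ν νa νb : Fin (n + 1) → ℤ}

lemma fireAt_eq (hd : MemP0 G d) {i : Fin (n + 1)} (hf : FireAt G d d' i) :
    d' = FiredBy d (fun v => if v = i then 1 else 0) := by
  obtain ⟨hs, hiff⟩ := hf
  have ho := hd.1.1
  obtain ⟨hno, hrev, hsame⟩ := firedBy_plus_apply ho i
  apply rel_ext
  intro j k
  rw [hiff j k]
  by_cases hj : j = i
  · constructor
    · rintro (⟨-, h1⟩ | ⟨⟨hji, -⟩, -⟩)
      · exfalso
        rw [hj] at h1
        exact ho.not_rev h1 (hs k (ho.adj h1).symm)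
      · exact absurd hj hji
    · intro h1
      rw [hj] at h1
      exact absurd h1 (hno k)
  · by_cases hk : k = i
    · rw [hk, hrev j hj]
      constructor
      · rintro (⟨-, h1⟩ | ⟨⟨-, hki⟩, -⟩)
        · exact h1
        · exact absurd rfl hki
      · intro h1
        exact Or.inl ⟨Or.inr rfl, h1⟩
    · rw [hsame j k hj hk]
      constructor
      · rintro (⟨hor, -⟩ | ⟨-, h1⟩)
        · rcases hor with h2 | h2
          · exact absurd h2 hj
          · exact absurd h2 hk
        · exact h1
      · intro h1
        exact Or.inr ⟨⟨hj, hk⟩, h1⟩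

/-- Necessity: a firing sequence gives a nonnegative firing vector. -/
lemma p0le_exists_nu (hd : MemP0 G d) (h : P0le G d d') :
    MemP0 G d' ∧ ∃ ν : Fin (n + 1) → ℤ,
      (∀ v, 0 ≤ ν v) ∧ ν 0 = 0 ∧ d' = FiredBy d ν := by
  induction h with
  | refl =>
    exact ⟨hd, fun _ => 0, fun v => le_refl 0, rfl,
      (firedBy_eq_self (fun _ => rfl) d).symm⟩
  | @tail b c h1 h2 ih =>
    obtain ⟨hb, ν, hpos, h0, hfb⟩ := ih
    obtain ⟨-, hc, i, hi0, hfire⟩ := h2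
    have hstep := fireAt_eq hb hfire
    refine ⟨hc, fun v => ν v + (if v = i then 1 else 0), ?_, ?_, ?_⟩
    · intro v
      have := hpos v
      show 0 ≤ ν v + (if v = i then 1 else 0)
      by_cases hv : v = i
      · rw [if_pos hv]; omega
      · rw [if_neg hv]; omega
    · show ν 0 + (if (0 : Fin (n + 1)) = i then 1 else 0) = 0
      rw [if_neg (Ne.symm hi0)]
      omega
    · rw [hstep, hfb,
        firedBy_comp hd.1.1 (eCond_of_orientation hd.1.1 hb.1.1 hfb)]

lemma firedBy_symm (ho : IsOrientation G d) (ho' : IsOrientation G d')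
    (hfb : d' = FiredBy d ν) : d = FiredBy d' (fun v => - ν v) := by
  have hE := eCond_of_orientation ho ho' hfb
  rw [hfb]
  exact (firedBy_inv ho hE).symm

lemma nu_adj0 (hd : MemP0 G d) (hd' : MemP0 G d') (hfb : d' = FiredBy d ν)
    (h0 : ν 0 = 0) : ∀ j, G.Adj j 0 → ν j = 0 := by
  intro j hadj
  have h1 : d' j 0 := hd'.2 j hadj.symm
  rw [hfb] at h1
  have h1' : (d j 0 ∧ ν j = ν 0) ∨ (d 0 j ∧ ν j + 1 = ν 0) := h1
  rcases h1' with ⟨-, h2⟩ | ⟨h2, -⟩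
  · omega
  · exact absurd h2 (hd.1.1.not_rev (hd.2 j hadj.symm))

/-- Every element of the component of `d₀` lies in the `FiredBy` orbit of `d₀`. -/
lemma mem_component {d₀ : Fin (n + 1) → Fin (n + 1) → Prop} (hd₀ : MemP0 G d₀)
    (h : Relation.ReflTransGen (ComparableP0 G) d₀ a) :
    MemP0 G a ∧ ∃ ν : Fin (n + 1) → ℤ, ν 0 = 0 ∧ a = FiredBy d₀ ν := by
  induction h with
  | refl =>
    exact ⟨hd₀, fun _ => 0, rfl, (firedBy_eq_self (fun _ => rfl) d₀).symm⟩
  | @tail b c h1 h2 ih =>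
    obtain ⟨hb, ν, h0, hfb⟩ := ih
    obtain ⟨hbmem, hcmem, hcomp⟩ := h2
    have hEν := eCond_of_orientation hd₀.1.1 hb.1.1 hfb
    rcases hcomp with h | h
    · obtain ⟨hc, μ, hpos, h0', hfb'⟩ := p0le_exists_nu hb h
      refine ⟨hc, fun v => ν v + μ v, show ν 0 + μ 0 = 0 by omega, ?_⟩
      rw [hfb', hfb, firedBy_comp hd₀.1.1 hEν]
    · obtain ⟨-, μ, hpos, h0', hfb'⟩ := p0le_exists_nu hcmem h
      have hsym : c = FiredBy b (fun v => - μ v) :=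
        firedBy_symm hcmem.1.1 hbmem.1.1 hfb'
      refine ⟨hcmem, fun v => ν v + - μ v, show ν 0 + - μ 0 = 0 by omega, ?_⟩
      rw [hsym, hfb, firedBy_comp hd₀.1.1 hEν]

/-- The order on a component is the pointwise order of firing vectors: ← direction. -/
lemma p0le_of_nu_le {d₀ : Fin (n + 1) → Fin (n + 1) → Prop} (hd₀ : MemP0 G d₀)
    (ha : MemP0 G a) (hb : MemP0 G b) (h0a : νa 0 = 0) (h0b : νb 0 = 0)
    (hfa : a = FiredBy d₀ νa) (hfb : b = FiredBy d₀ νb)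
    (hle : ∀ v, νa v ≤ νb v) : P0le G a b := by
  have hd₀a : d₀ = FiredBy a (fun v => - νa v) := firedBy_symm hd₀.1.1 ha.1.1 hfa
  have hEnega : ECond G a (fun v => - νa v) :=
    eCond_of_orientation ha.1.1 hd₀.1.1 hd₀a
  have hba : b = FiredBy a (fun v => - νa v + νb v) := by
    rw [hfb, hd₀a, firedBy_comp ha.1.1 hEnega]
  have hEδ : ECond G a (fun v => - νa v + νb v) :=
    eCond_of_orientation ha.1.1 hb.1.1 hba
  have hadj0a := nu_adj0 hd₀ ha hfa h0a
  have hadj0b := nu_adj0 hd₀ hb hfb h0b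
  obtain ⟨-, hP⟩ := fireUp (∑ v, ((- νa v + νb v)).toNat) a (fun v => - νa v + νb v)
    ha (fun v => by have := hle v; show 0 ≤ -νa v + νb v; omega) (show -νa 0 + νb 0 = 0 by omega)
    (fun j hadj => by have := hadj0a j hadj; have := hadj0b j hadj; show -νa j + νb j = 0; omega)
    hEδ rfl
  rw [← hba] at hP
  exact hP

/-- The order on a component is the pointwise order of firing vectors: → direction. -/
lemma nu_le_of_p0le (hG : G.Connected) {d₀ : Fin (n + 1) → Fin (n + 1) → Prop}
    (hd₀ : MemP0 G d₀)
    (ha : MemP0 G a) (hb : MemP0 G b) (h0a : νa 0 = 0) (h0b : νb 0 = 0)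
    (hfa : a = FiredBy d₀ νa) (hfb : b = FiredBy d₀ νb)
    (hle : P0le G a b) : ∀ v, νa v ≤ νb v := by
  obtain ⟨-, μ, hpos, h0μ, hfb'⟩ := p0le_exists_nu ha hle
  have hcomp : b = FiredBy d₀ (fun v => νa v + μ v) := by
    rw [hfb', hfa, firedBy_comp hd₀.1.1 (eCond_of_orientation hd₀.1.1 ha.1.1 hfa)]
  have huniq := nu_unique hG hd₀.1.1 hb.1.1 hfb hcomp
    (show νb 0 = νa 0 + μ 0 by omega)
  intro v
  have := congrFun huniq v
  have hμ := hpos v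
  omega

end Aux7
section Aux8

variable {n : ℕ} {G : SimpleGraph (Fin (n + 1))}
variable {d₀ a b : Fin (n + 1) → Fin (n + 1) → Prop}
variable {νa νb : Fin (n + 1) → ℤ}

lemma meet_spec (hd₀ : MemP0 G d₀)
    (ha : MemP0 G a) (hb : MemP0 G b) (h0a : νa 0 = 0) (h0b : νb 0 = 0)
    (hfa : a = FiredBy d₀ νa) (hfb : b = FiredBy d₀ νb) :
    MemP0 G (FiredBy d₀ (fun v => min (νa v) (νb v))) ∧
    P0le G (FiredBy d₀ (fun v => min (νa v) (νb v))) a := by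
  have hd₀a : d₀ = FiredBy a (fun v => - νa v) := firedBy_symm hd₀.1.1 ha.1.1 hfa
  have hEnega : ECond G a (fun v => - νa v) :=
    eCond_of_orientation ha.1.1 hd₀.1.1 hd₀a
  have hba : b = FiredBy a (fun v => - νa v + νb v) := by
    rw [hfb, hd₀a, firedBy_comp ha.1.1 hEnega]
  have hEδ : ECond G a (fun v => - νa v + νb v) :=
    eCond_of_orientation ha.1.1 hb.1.1 hba
  have hEσ : ECond G a (fun v => min (- νa v + νb v) 0) := eCond_negPart hEδ
  have hadj0a := nu_adj0 hd₀ ha hfa h0a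
  have hadj0b := nu_adj0 hd₀ hb hfb h0b
  have hEνa : ECond G d₀ νa := eCond_of_orientation hd₀.1.1 ha.1.1 hfa
  have hmeq : FiredBy a (fun v => min (- νa v + νb v) 0)
      = FiredBy d₀ (fun v => min (νa v) (νb v)) := by
    rw [hfa, firedBy_comp hd₀.1.1 hEνa]
    have hfunn : (fun v => νa v + min (- νa v + νb v) 0)
        = (fun v => min (νa v) (νb v)) := by
      funext v
      show νa v + min (- νa v + νb v) 0 = min (νa v) (νb v)
      omega
    rw [hfunn]
  obtain ⟨hmem, hP⟩ := fireDown (∑ v, (-(min (- νa v + νb v) 0)).toNat) a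
    (fun v => min (- νa v + νb v) 0) ha
    (fun v => by show min (- νa v + νb v) 0 ≤ 0; omega)
    (show min (- νa 0 + νb 0) 0 = 0 by omega)
    (fun j hadj => by
      have := hadj0a j hadj; have := hadj0b j hadj
      show min (- νa j + νb j) 0 = 0; omega)
    hEσ rfl
  rw [hmeq] at hmem hP
  exact ⟨hmem, hP⟩

lemma join_spec (hd₀ : MemP0 G d₀)
    (ha : MemP0 G a) (hb : MemP0 G b) (h0a : νa 0 = 0) (h0b : νb 0 = 0)
    (hfa : a = FiredBy d₀ νa) (hfb : b = FiredBy d₀ νb) :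
    MemP0 G (FiredBy d₀ (fun v => max (νa v) (νb v))) ∧
    P0le G a (FiredBy d₀ (fun v => max (νa v) (νb v))) := by
  have hd₀a : d₀ = FiredBy a (fun v => - νa v) := firedBy_symm hd₀.1.1 ha.1.1 hfa
  have hEnega : ECond G a (fun v => - νa v) :=
    eCond_of_orientation ha.1.1 hd₀.1.1 hd₀a
  have hba : b = FiredBy a (fun v => - νa v + νb v) := by
    rw [hfb, hd₀a, firedBy_comp ha.1.1 hEnega]
  have hEδ : ECond G a (fun v => - νa v + νb v) :=
    eCond_of_orientation ha.1.1 hb.1.1 hba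
  have hEσ : ECond G a (fun v => max (- νa v + νb v) 0) := eCond_posPart hEδ
  have hadj0a := nu_adj0 hd₀ ha hfa h0a
  have hadj0b := nu_adj0 hd₀ hb hfb h0b
  have hEνa : ECond G d₀ νa := eCond_of_orientation hd₀.1.1 ha.1.1 hfa
  have hmeq : FiredBy a (fun v => max (- νa v + νb v) 0)
      = FiredBy d₀ (fun v => max (νa v) (νb v)) := by
    rw [hfa, firedBy_comp hd₀.1.1 hEνa]
    have hfunn : (fun v => νa v + max (- νa v + νb v) 0)
        = (fun v => max (νa v) (νb v)) := by
      funext v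
      show νa v + max (- νa v + νb v) 0 = max (νa v) (νb v)
      omega
    rw [hfunn]
  obtain ⟨hmem, hP⟩ := fireUp (∑ v, (max (- νa v + νb v) 0).toNat) a
    (fun v => max (- νa v + νb v) 0) ha
    (fun v => by show 0 ≤ max (- νa v + νb v) 0; omega)
    (show max (- νa 0 + νb 0) 0 = 0 by omega)
    (fun j hadj => by
      have := hadj0a j hadj; have := hadj0b j hadj
      show max (- νa j + νb j) 0 = 0; omega)
    hEσ rfl
  rw [hmeq] at hmem hP
  exact ⟨hmem, hP⟩

end Aux8
/-- each connected component of the poset `P₀` of acyclic orientations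
with `0` as a sink is a distributive lattice: meets and joins exist in the component
and satisfy the distributive law `a ∧ (b ∨ c) = (a ∧ b) ∨ (a ∧ c)`. -/
theorem component_is_distributive_lattice (n : ℕ)
    (G : SimpleGraph (Fin (n + 1))) (hG : G.Connected)
    (Q : Set (Fin (n + 1) → Fin (n + 1) → Prop)) (hQ : IsComponent G Q) :
    (∀ a ∈ Q, ∀ b ∈ Q, (∃ m, IsMeetIn G Q a b m) ∧ (∃ j, IsJoinIn G Q a b j)) ∧
    (∀ a ∈ Q, ∀ b ∈ Q, ∀ c ∈ Q, ∀ bc ab ac u v,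
      IsJoinIn G Q b c bc → IsMeetIn G Q a b ab → IsMeetIn G Q a c ac →
      IsMeetIn G Q a bc u → IsJoinIn G Q ab ac v → u = v) := by
  obtain ⟨d₀, hd₀, rfl⟩ := hQ
  set Qs : Set (Fin (n + 1) → Fin (n + 1) → Prop) :=
    {d' | Relation.ReflTransGen (ComparableP0 G) d₀ d'} with hQs
  -- the full meet property for the canonical candidate
  have meet_full : ∀ a b (νa νb : Fin (n + 1) → ℤ),
      Relation.ReflTransGen (ComparableP0 G) d₀ a →
      Relation.ReflTransGen (ComparableP0 G) d₀ b →
      νa 0 = 0 → νb 0 = 0 → a = FiredBy d₀ νa → b = FiredBy d₀ νb →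
      IsMeetIn G Qs a b (FiredBy d₀ (fun w => min (νa w) (νb w))) := by
    intro a b νa νb haQ hbQ h0a h0b hfa hfb
    obtain ⟨ha, -⟩ := mem_component hd₀ haQ
    obtain ⟨hb, -⟩ := mem_component hd₀ hbQ
    obtain ⟨hmmem, hma⟩ := meet_spec hd₀ ha hb h0a h0b hfa hfb
    have h0m : (fun w => min (νa w) (νb w)) 0 = 0 := show min (νa 0) (νb 0) = 0 by omega
    have hmb : P0le G (FiredBy d₀ (fun w => min (νa w) (νb w))) b :=
      p0le_of_nu_le hd₀ hmmem hb h0m h0b rfl hfb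
        (fun w => by show min (νa w) (νb w) ≤ νb w; omega)
    have hmQ : FiredBy d₀ (fun w => min (νa w) (νb w)) ∈ Qs :=
      haQ.tail ⟨ha, hmmem, Or.inr hma⟩
    refine ⟨hmQ, hma, hmb, ?_⟩
    intro c hcQ hca hcb
    obtain ⟨hc, νc, h0c, hfc⟩ := mem_component hd₀ hcQ
    have h1 := nu_le_of_p0le hG hd₀ hc ha h0c h0a hfc hfa hca
    have h2 := nu_le_of_p0le hG hd₀ hc hb h0c h0b hfc hfb hcb
    exact p0le_of_nu_le hd₀ hc hmmem h0c h0m hfc rfl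
      (fun w => by have := h1 w; have := h2 w; show νc w ≤ min (νa w) (νb w); omega)
  have join_full : ∀ a b (νa νb : Fin (n + 1) → ℤ),
      Relation.ReflTransGen (ComparableP0 G) d₀ a →
      Relation.ReflTransGen (ComparableP0 G) d₀ b →
      νa 0 = 0 → νb 0 = 0 → a = FiredBy d₀ νa → b = FiredBy d₀ νb →
      IsJoinIn G Qs a b (FiredBy d₀ (fun w => max (νa w) (νb w))) := by
    intro a b νa νb haQ hbQ h0a h0b hfa hfb
    obtain ⟨ha, -⟩ := mem_component hd₀ haQ
    obtain ⟨hb, -⟩ := mem_component hd₀ hbQ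
    obtain ⟨hmmem, hma⟩ := join_spec hd₀ ha hb h0a h0b hfa hfb
    have h0m : (fun w => max (νa w) (νb w)) 0 = 0 := show max (νa 0) (νb 0) = 0 by omega
    have hmb : P0le G b (FiredBy d₀ (fun w => max (νa w) (νb w))) :=
      p0le_of_nu_le hd₀ hb hmmem h0b h0m hfb rfl
        (fun w => by show νb w ≤ max (νa w) (νb w); omega)
    have hmQ : FiredBy d₀ (fun w => max (νa w) (νb w)) ∈ Qs :=
      haQ.tail ⟨ha, hmmem, Or.inl hma⟩
    refine ⟨hmQ, hma, hmb, ?_⟩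
    intro c hcQ hca hcb
    obtain ⟨hc, νc, h0c, hfc⟩ := mem_component hd₀ hcQ
    have h1 := nu_le_of_p0le hG hd₀ ha hc h0a h0c hfa hfc hca
    have h2 := nu_le_of_p0le hG hd₀ hb hc h0b h0c hfb hfc hcb
    exact p0le_of_nu_le hd₀ hmmem hc h0m h0c rfl hfc
      (fun w => by have := h1 w; have := h2 w; show max (νa w) (νb w) ≤ νc w; omega)
  -- uniqueness of meets and joins
  have meet_eq : ∀ a b (νa νb : Fin (n + 1) → ℤ) m',
      Relation.ReflTransGen (ComparableP0 G) d₀ a →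
      Relation.ReflTransGen (ComparableP0 G) d₀ b →
      νa 0 = 0 → νb 0 = 0 → a = FiredBy d₀ νa → b = FiredBy d₀ νb →
      IsMeetIn G Qs a b m' → m' = FiredBy d₀ (fun w => min (νa w) (νb w)) := by
    intro a b νa νb m' haQ hbQ h0a h0b hfa hfb hm'
    obtain ⟨hm'Q, hm'a, hm'b, hm'univ⟩ := hm'
    obtain ⟨hmQ, hma, hmb, hmuniv⟩ := meet_full a b νa νb haQ hbQ h0a h0b hfa hfb
    obtain ⟨hm'mem, νm', h0m', hfm'⟩ := mem_component hd₀ hm'Q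
    obtain ⟨hmmem, -⟩ := mem_component hd₀ hmQ
    have h0min : (fun w => min (νa w) (νb w)) 0 = 0 := show min (νa 0) (νb 0) = 0 by omega
    have hle1 := nu_le_of_p0le hG hd₀ hm'mem hmmem h0m' h0min hfm' rfl
      (hmuniv m' hm'Q hm'a hm'b)
    have hle2 := nu_le_of_p0le hG hd₀ hmmem hm'mem h0min h0m' rfl hfm'
      (hm'univ _ hmQ hma hmb)
    have hfun : νm' = fun w => min (νa w) (νb w) :=
      funext (fun w => le_antisymm (hle1 w) (hle2 w))
    rw [hfm', hfun]
  have join_eq : ∀ a b (νa νb : Fin (n + 1) → ℤ) m',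
      Relation.ReflTransGen (ComparableP0 G) d₀ a →
      Relation.ReflTransGen (ComparableP0 G) d₀ b →
      νa 0 = 0 → νb 0 = 0 → a = FiredBy d₀ νa → b = FiredBy d₀ νb →
      IsJoinIn G Qs a b m' → m' = FiredBy d₀ (fun w => max (νa w) (νb w)) := by
    intro a b νa νb m' haQ hbQ h0a h0b hfa hfb hm'
    obtain ⟨hm'Q, hm'a, hm'b, hm'univ⟩ := hm'
    obtain ⟨hmQ, hma, hmb, hmuniv⟩ := join_full a b νa νb haQ hbQ h0a h0b hfa hfb
    obtain ⟨hm'mem, νm', h0m', hfm'⟩ := mem_component hd₀ hm'Q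
    obtain ⟨hmmem, -⟩ := mem_component hd₀ hmQ
    have h0max : (fun w => max (νa w) (νb w)) 0 = 0 := show max (νa 0) (νb 0) = 0 by omega
    have hle1 := nu_le_of_p0le hG hd₀ hm'mem hmmem h0m' h0max hfm' rfl
      (hm'univ _ hmQ hma hmb)
    have hle2 := nu_le_of_p0le hG hd₀ hmmem hm'mem h0max h0m' rfl hfm'
      (hmuniv m' hm'Q hm'a hm'b)
    have hfun : νm' = fun w => max (νa w) (νb w) :=
      funext (fun w => le_antisymm (hle1 w) (hle2 w))
    rw [hfm', hfun]
  constructor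
  · intro a haQ b hbQ
    obtain ⟨-, νa, h0a, hfa⟩ := mem_component hd₀ haQ
    obtain ⟨-, νb, h0b, hfb⟩ := mem_component hd₀ hbQ
    exact ⟨⟨_, meet_full a b νa νb haQ hbQ h0a h0b hfa hfb⟩,
      ⟨_, join_full a b νa νb haQ hbQ h0a h0b hfa hfb⟩⟩
  · intro a haQ b hbQ c hcQ bc ab ac u v hbc hab hac hu hv
    obtain ⟨-, νa, h0a, hfa⟩ := mem_component hd₀ haQ
    obtain ⟨-, νb, h0b, hfb⟩ := mem_component hd₀ hbQ
    obtain ⟨-, νc, h0c, hfc⟩ := mem_component hd₀ hcQ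
    have hbcQ : Relation.ReflTransGen (ComparableP0 G) d₀ bc := hbc.1
    have habQ : Relation.ReflTransGen (ComparableP0 G) d₀ ab := hab.1
    have hacQ : Relation.ReflTransGen (ComparableP0 G) d₀ ac := hac.1
    have hbc' : bc = FiredBy d₀ (fun w => max (νb w) (νc w)) :=
      join_eq b c νb νc bc hbQ hcQ h0b h0c hfb hfc hbc
    have hab' : ab = FiredBy d₀ (fun w => min (νa w) (νb w)) :=
      meet_eq a b νa νb ab haQ hbQ h0a h0b hfa hfb hab
    have hac' : ac = FiredBy d₀ (fun w => min (νa w) (νc w)) :=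
      meet_eq a c νa νc ac haQ hcQ h0a h0c hfa hfc hac
    have hu' : u = FiredBy d₀ (fun w => min (νa w) (max (νb w) (νc w))) :=
      meet_eq a bc νa (fun w => max (νb w) (νc w)) u haQ hbcQ h0a
        (show max (νb 0) (νc 0) = 0 by omega) hfa hbc' hu
    have hv' : v = FiredBy d₀
        (fun w => max (min (νa w) (νb w)) (min (νa w) (νc w))) :=
      join_eq ab ac (fun w => min (νa w) (νb w)) (fun w => min (νa w) (νc w)) v
        habQ hacQ (show min (νa 0) (νb 0) = 0 by omega)
        (show min (νa 0) (νc 0) = 0 by omega) hab' hac' hv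
    rw [hu', hv']
    have hdistrib : (fun w => min (νa w) (max (νb w) (νc w)))
        = (fun w => max (min (νa w) (νb w)) (min (νa w) (νc w))) := by
      funext w
      omega
    rw [hdistrib]
end
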